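/- arXiv:math/0302032 — 6 statements merged into one kernel-verified Lean document; each statement's English description precedes it below -/
import Mathlib

section
/- For 0 < q < 1 and real x > 0 and t, define K(x,t) = x^t/(1+x) · (1+1/x)_q^t · (1+x)_q^{1-t}, where (1+a)_q^t = ∏_{j≥0}(1+q^j a) / ∏_{j≥0}(1+q^{t+j} a). Then K is a q-constant in x: K(qx, t) = K(x, t) for all x > 0. -/
/-!
Both `q`-Pochhammer symbols in `K` satisfy the functional equation
`(1+a)_q^t = (1+a)/(1+q^t a) · (1+qa)_q^t`, obtained by splitting off the first factor of the
two infinite products. Replacing `x` by `qx` therefore multiplies `(1+1/x)_q^t` and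
`(1+x)_q^{1-t}` by explicit rational factors in `x` and `q^t`, which cancel against the change
of `x^t/(1+x)`.
-/

noncomputable def qpochInf (q a : ℝ) : ℝ := ∏' j : ℕ, (1 + q ^ j * a)

noncomputable def qpochT (q a t : ℝ) : ℝ := qpochInf q a / qpochInf q (q ^ t * a)

noncomputable def K (q x t : ℝ) : ℝ :=
  x ^ t / (1 + x) * qpochT q (1 / x) t * qpochT q x (1 - t)

lemma multipliable_one_add_pow_mul {q : ℝ} (hq : |q| < 1) (a : ℝ) :
    Multipliable fun j : ℕ => 1 + q ^ j * a :=
  Real.multipliable_one_add_of_summable ((summable_geometric_of_abs_lt_one hq).mul_right a)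

lemma qpochInf_eq_one_add_mul {q : ℝ} (hq : |q| < 1) (a : ℝ) :
    qpochInf q a = (1 + a) * qpochInf q (q * a) := by
  have hshift : (fun j : ℕ => 1 + q ^ (j + 1) * a) = fun j => 1 + q ^ j * (q * a) := by
    ext j
    ring
  unfold qpochInf
  rw [tprod_eq_zero_mul' (hshift ▸ multipliable_one_add_pow_mul hq (q * a)), hshift, pow_zero,
    one_mul]

lemma qpochT_eq_div_mul {q : ℝ} (hq : |q| < 1) (a t : ℝ) :
    qpochT q a t = (1 + a) / (1 + q ^ t * a) * qpochT q (q * a) t := by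
  unfold qpochT
  rw [qpochInf_eq_one_add_mul hq a, qpochInf_eq_one_add_mul hq (q ^ t * a),
    mul_left_comm q, mul_div_mul_comm]

theorem stmt_0 (q x t : ℝ) (hq0 : 0 < q) (hq1 : q < 1) (hx : 0 < x) :
    K q (q * x) t = K q x t := by
  have hq : |q| < 1 := by rwa [abs_of_pos hq0]
  have hinv : qpochT q (1 / (q * x)) t =
      (1 + 1 / (q * x)) / (1 + q ^ t * (1 / (q * x))) * qpochT q (1 / x) t := by
    rw [qpochT_eq_div_mul hq, show q * (1 / (q * x)) = 1 / x by field_simp]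
  unfold K
  rw [hinv, qpochT_eq_div_mul hq x (1 - t), Real.mul_rpow hq0.le hx.le,
    Real.rpow_sub hq0, Real.rpow_one]
  field_simp
  ring
end

section
/- With K(x,t) = x^t/(1+x) · (1+1/x)_q^t · (1+x)_q^{1-t} for 0 < q < 1 and x > 0, one has K(x, n) = q^{n(n-1)/2} for every positive integer n (independently of x). -/
section
variable {q a : ℝ}

lemma log_summable (hq0 : 0 < q) (hq1 : q < 1) (ha : 0 < a) :
    Summable fun j : ℕ => Real.log (1 + q ^ j * a) := by
  have hpos : ∀ j : ℕ, (0:ℝ) < q ^ j * a := fun j => mul_pos (pow_pos hq0 j) ha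
  refine Summable.of_nonneg_of_le (fun j => Real.log_nonneg (by linarith [hpos j]))
    (fun j => ?_) ((summable_geometric_of_lt_one hq0.le hq1).mul_right a)
  have := Real.log_le_sub_one_of_pos (x := 1 + q ^ j * a) (by linarith [hpos j])
  linarith

lemma mult (hq0 : 0 < q) (hq1 : q < 1) (ha : 0 < a) :
    Multipliable fun j : ℕ => 1 + q ^ j * a := by
  have := Real.multipliable_of_summable_log (f := fun j : ℕ => 1 + q ^ j * a)
    (fun j => by positivity) (log_summable hq0 hq1 ha)
  exact this

lemma qpochInf_pos (hq0 : 0 < q) (hq1 : q < 1) (ha : 0 < a) : 0 < qpochInf q a := by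
  have := Real.rexp_tsum_eq_tprod (f := fun j : ℕ => 1 + q ^ j * a)
    (fun j => by positivity) (log_summable hq0 hq1 ha)
  unfold qpochInf
  rw [← this]
  exact Real.exp_pos _

lemma qpochInf_shift (hq0 : 0 < q) (hq1 : q < 1) (ha : 0 < a) (k : ℕ) :
    qpochInf q a = (∏ j ∈ Finset.range k, (1 + q ^ j * a)) * qpochInf q (q ^ k * a) := by
  have hfe : (fun i : ℕ => 1 + q ^ (i + k) * a) = fun i : ℕ => 1 + q ^ i * (q ^ k * a) := by
    funext i; rw [pow_add]; ring
  have hm : Multipliable (fun i : ℕ => (1 : ℝ) + q ^ (i + k) * a) := by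
    rw [hfe]; exact mult hq0 hq1 (mul_pos (pow_pos hq0 k) ha)
  have h := Multipliable.prod_mul_tprod_nat_mul' (f := fun j : ℕ => 1 + q ^ j * a) (k := k) hm
  unfold qpochInf
  rw [← h]
  congr 1
  rw [← hfe]

theorem stmt_2 (q x : ℝ) (hq0 : 0 < q) (hq1 : q < 1) (hx : 0 < x) (n : ℕ) (hn : 0 < n) :
    K q x (n : ℝ) = q ^ (n * (n - 1) / 2) := by
  obtain ⟨m, rfl⟩ : ∃ m, n = m + 1 := ⟨n - 1, by omega⟩
  have hq0' : (0:ℝ) < q ^ m := pow_pos hq0 m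
  have hxi : (0:ℝ) < 1 / x := by positivity
  have hb : (0:ℝ) < (q ^ m)⁻¹ * x := by positivity
  have h1 : q ^ (((m+1:ℕ)):ℝ) = q ^ (m+1) := by rw [Real.rpow_natCast]
  have hx1 : x ^ (((m+1:ℕ)):ℝ) = x ^ (m+1) := by rw [Real.rpow_natCast]
  have h2 : q ^ ((1:ℝ) - ((m+1:ℕ)):ℝ) = (q ^ m)⁻¹ := by
    push_cast
    rw [show (1:ℝ) - ((m:ℝ)+1) = -(m:ℝ) by ring, Real.rpow_neg hq0.le, Real.rpow_natCast]
  have hT1 : qpochT q (1/x) (((m+1:ℕ)):ℝ)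
      = ∏ j ∈ Finset.range (m+1), (1 + q ^ j * (1/x)) := by
    unfold qpochT
    rw [h1, qpochInf_shift hq0 hq1 hxi (m+1)]
    have hB : 0 < qpochInf q (q ^ (m+1) * (1/x)) :=
      qpochInf_pos hq0 hq1 (by positivity)
    rw [mul_div_assoc, div_self hB.ne', mul_one]
  have hT2 : qpochT q x ((1:ℝ) - ((m+1:ℕ)):ℝ)
      = 1 / ∏ j ∈ Finset.range m, (1 + q ^ j * ((q ^ m)⁻¹ * x)) := by
    unfold qpochT
    rw [h2, qpochInf_shift hq0 hq1 hb m]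
    have hxx : q ^ m * ((q ^ m)⁻¹ * x) = x := by field_simp
    rw [hxx]
    have hC : 0 < qpochInf q x := qpochInf_pos hq0 hq1 hx
    have hP : 0 < ∏ j ∈ Finset.range m, (1 + q ^ j * ((q ^ m)⁻¹ * x)) := by
      exact Finset.prod_pos (fun j _ => by positivity)
    rw [div_eq_div_iff (by positivity) hP.ne']
    ring
  unfold K
  rw [hT1, hT2, hx1]
  have hApos : 0 < ∏ j ∈ Finset.range m, (x + q ^ (j+1)) :=
    Finset.prod_pos (fun j _ => by positivity)
  have e1 : (∏ j ∈ Finset.range (m+1), (1 + q ^ j * (1/x))) * x ^ (m+1)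
      = (1 + x) * ∏ j ∈ Finset.range m, (x + q ^ (j+1)) := by
    have h : (∏ j ∈ Finset.range (m+1), ((1 + q ^ j * (1/x)) * x))
        = ∏ j ∈ Finset.range (m+1), (x + q ^ j) :=
      Finset.prod_congr rfl (fun j _ => by field_simp)
    rw [Finset.prod_mul_distrib, Finset.prod_const, Finset.card_range] at h
    rw [h, Finset.prod_range_succ', pow_zero]
    ring
  have e2 : (∏ j ∈ Finset.range m, (1 + q ^ j * ((q ^ m)⁻¹ * x)))
        * q ^ ((m+1) * m / 2) = ∏ j ∈ Finset.range m, (x + q ^ (j+1)) := by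
    have hsum : ∑ j ∈ Finset.range m, (m - j) = (m+1) * m / 2 := by
      have hr := Finset.sum_range_reflect (fun j => j + 1) m
      have h2 : ∀ j ∈ Finset.range m, m - 1 - j + 1 = m - j := by
        intro j hj
        simp only [Finset.mem_range] at hj
        omega
      rw [Finset.sum_congr rfl h2] at hr
      rw [hr]
      have g := Finset.sum_range_succ' (fun i => i) m
      have hg := Finset.sum_range_id_mul_two (m+1)
      rw [Nat.add_sub_cancel] at hg
      omega
    rw [← hsum, ← Finset.prod_pow_eq_pow_sum, ← Finset.prod_mul_distrib]
    have hkey : ∀ j ∈ Finset.range m, (1 + q ^ j * ((q ^ m)⁻¹ * x)) * q ^ (m - j)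
        = x + q ^ (m - j) := by
      intro j hj
      simp only [Finset.mem_range] at hj
      have hq : q ^ j * q ^ (m - j) = q ^ m := by
        rw [← pow_add]; congr 1; omega
      field_simp
      linear_combination x * hq
    rw [Finset.prod_congr rfl hkey]
    have hr := Finset.prod_range_reflect (fun j => x + q ^ (j+1)) m
    have h3 : ∀ j ∈ Finset.range m, x + q ^ (m - 1 - j + 1) = x + q ^ (m - j) := by
      intro j hj
      simp only [Finset.mem_range] at hj
      congr 2
      omega
    rw [Finset.prod_congr rfl h3] at hr
    rw [hr]
  have hP2 : (0:ℝ) < ∏ j ∈ Finset.range m, (1 + q ^ j * ((q ^ m)⁻¹ * x)) :=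
    Finset.prod_pos (fun j _ => by positivity)
  have hexp : (m+1) * ((m+1) - 1) / 2 = (m+1) * m / 2 := by simp
  rw [hexp]
  have h1x : (0:ℝ) < 1 + x := by linarith
  have hP1' : (∏ j ∈ Finset.range (m+1), (1 + q ^ j * (1/x)))
      = (1 + x) * (∏ j ∈ Finset.range m, (x + q ^ (j+1))) / x ^ (m+1) := by
    rw [eq_div_iff (by positivity)]
    exact e1
  have hP2' : (1:ℝ) / (∏ j ∈ Finset.range m, (1 + q ^ j * ((q ^ m)⁻¹ * x)))
      = q ^ ((m+1) * m / 2) / ∏ j ∈ Finset.range m, (x + q ^ (j+1)) := by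
    rw [div_eq_div_iff hP2.ne' hApos.ne']
    linarith [e2]
  rw [hP1', hP2']
  field_simp
end
end

section
/- For fixed x > 0 and t ∈ (0,1), the limit as q → 0⁺ of K(x,t) = x^t/(1+x) · (1+1/x)_q^t · (1+x)_q^{1-t} equals x^t + x^{t-1}. In particular, K(x,t) is not constant in x for such t. -/
/-!
For `0 ≤ b` and `0 ≤ q < 1` one has `1 ≤ (1 + b)_q^∞ ≤ exp (b / (1 - q))`, because
`0 ≤ log (1 + q^j b) ≤ q^j b`; hence `(1 + b)_q^∞ → 1` whenever `b → 0`.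
Peeling off the factor `j = 0` gives `(1 + a)_q^t = (1 + a) (1 + q a)_q^∞ / (1 + q^t a)_q^∞`,
which tends to `1 + a` as `q → 0⁺` when `t > 0`. So `K(x, t)` tends to
`x^t / (1 + x) · (1 + 1/x) (1 + x) = x^t + x^(t-1)`.
-/

open Filter Real Set Topology

section

variable {q b : ℝ}

lemma summable_log_one_add_pow_mul (hq₀ : 0 ≤ q) (hq₁ : q < 1) (hb : 0 ≤ b) :
    Summable fun j : ℕ => log (1 + q ^ j * b) := by
  refine Summable.of_nonneg_of_le (fun j => log_nonneg (le_add_of_nonneg_right (by positivity)))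
    (fun j => ?_) ((summable_geometric_of_lt_one hq₀ hq₁).mul_right b)
  linarith [log_le_sub_one_of_pos (x := 1 + q ^ j * b) (by positivity)]

lemma qpochInf_eq_exp_tsum_log (hq₀ : 0 ≤ q) (hq₁ : q < 1) (hb : 0 ≤ b) :
    qpochInf q b = exp (∑' j : ℕ, log (1 + q ^ j * b)) :=
  (rexp_tsum_eq_tprod (fun j => by positivity) (summable_log_one_add_pow_mul hq₀ hq₁ hb)).symm

lemma one_le_qpochInf (hq₀ : 0 ≤ q) (hq₁ : q < 1) (hb : 0 ≤ b) : 1 ≤ qpochInf q b := by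
  rw [qpochInf_eq_exp_tsum_log hq₀ hq₁ hb]
  exact one_le_exp (tsum_nonneg fun j => log_nonneg (le_add_of_nonneg_right (by positivity)))

lemma qpochInf_le_exp (hq₀ : 0 ≤ q) (hq₁ : q < 1) (hb : 0 ≤ b) :
    qpochInf q b ≤ exp ((1 - q)⁻¹ * b) := by
  have hgeom : ∑' j : ℕ, q ^ j * b = (1 - q)⁻¹ * b := by
    rw [tsum_mul_right, tsum_geometric_of_lt_one hq₀ hq₁]
  rw [qpochInf_eq_exp_tsum_log hq₀ hq₁ hb, ← hgeom, exp_le_exp]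
  refine Summable.tsum_le_tsum (fun j => ?_) (summable_log_one_add_pow_mul hq₀ hq₁ hb)
    ((summable_geometric_of_lt_one hq₀ hq₁).mul_right b)
  linarith [log_le_sub_one_of_pos (x := 1 + q ^ j * b) (by positivity)]

lemma qpochInf_eq_one_add_mul_qpochInf_mul (hq₀ : 0 ≤ q) (hq₁ : q < 1) (hb : 0 ≤ b) :
    qpochInf q b = (1 + b) * qpochInf q (q * b) := by
  have hqb : 0 ≤ q * b := by positivity
  have hmult : Multipliable fun j : ℕ => 1 + q ^ (j + 1) * b :=
    (multipliable_of_summable_log (fun j => by positivity)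
      (summable_log_one_add_pow_mul hq₀ hq₁ hqb)).congr fun j => by ring
  have hpeel := tprod_eq_zero_mul' (f := fun j : ℕ => 1 + q ^ j * b) hmult
  simp only [pow_zero, one_mul] at hpeel
  rw [qpochInf, hpeel, qpochInf]
  congr 1
  exact tprod_congr fun j => by ring

end

lemma tendsto_qpochInf_nhds_one {f : ℝ → ℝ} (hf : Tendsto f (𝓝[>] 0) (𝓝 0))
    (hf₀ : ∀ᶠ q in 𝓝[>] 0, 0 ≤ f q) :
    Tendsto (fun q => qpochInf q (f q)) (𝓝[>] 0) (𝓝 1) := by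
  have hq : ∀ᶠ q in 𝓝[>] (0 : ℝ), q ∈ Ioo 0 1 := Ioo_mem_nhdsGT_of_mem ⟨le_rfl, one_pos⟩
  have hinv : Tendsto (fun q : ℝ => (1 - q)⁻¹) (𝓝[>] 0) (𝓝 1) := by
    have : ContinuousAt (fun q : ℝ => (1 - q)⁻¹) 0 := by fun_prop (disch := norm_num)
    simpa using this.tendsto.mono_left nhdsWithin_le_nhds
  have hupper : Tendsto (fun q => exp ((1 - q)⁻¹ * f q)) (𝓝[>] 0) (𝓝 1) := by
    simpa using (hinv.mul hf).rexp
  refine tendsto_of_tendsto_of_tendsto_of_le_of_le' tendsto_const_nhds hupper ?_ ?_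
  · filter_upwards [hq, hf₀] with q hq hfq using one_le_qpochInf hq.1.le hq.2 hfq
  · filter_upwards [hq, hf₀] with q hq hfq using qpochInf_le_exp hq.1.le hq.2 hfq

lemma tendsto_qpochT {a t : ℝ} (ha : 0 ≤ a) (ht : 0 < t) :
    Tendsto (fun q => qpochT q a t) (𝓝[>] 0) (𝓝 (1 + a)) := by
  have hpos : ∀ᶠ q in 𝓝[>] (0 : ℝ), 0 < q := self_mem_nhdsWithin
  have hq : ∀ᶠ q in 𝓝[>] (0 : ℝ), q ∈ Ioo 0 1 := Ioo_mem_nhdsGT_of_mem ⟨le_rfl, one_pos⟩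
  have hnum : Tendsto (fun q => qpochInf q (q * a)) (𝓝[>] 0) (𝓝 1) := by
    refine tendsto_qpochInf_nhds_one ?_ (by filter_upwards [hpos] with q hq using by positivity)
    simpa using ((continuous_id.tendsto 0).mono_left nhdsWithin_le_nhds).mul_const a
  have hden : Tendsto (fun q => qpochInf q (q ^ t * a)) (𝓝[>] 0) (𝓝 1) := by
    refine tendsto_qpochInf_nhds_one ?_ (by filter_upwards [hpos] with q hq using by positivity)
    have hrpow : Tendsto (fun q : ℝ => q ^ t) (𝓝[>] 0) (𝓝 0) := by
      simpa [zero_rpow ht.ne'] using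
        (continuousAt_rpow_const 0 t (Or.inr ht.le)).tendsto.mono_left nhdsWithin_le_nhds
    simpa using hrpow.mul_const a
  have hlim := (hnum.const_mul (1 + a)).div hden one_ne_zero
  rw [mul_one, div_one] at hlim
  refine hlim.congr' ?_
  filter_upwards [hq] with q hq
  rw [Pi.div_apply, qpochT, qpochInf_eq_one_add_mul_qpochInf_mul hq.1.le hq.2 ha]

theorem stmt_3 (x t : ℝ) (hx : 0 < x) (ht : t ∈ Set.Ioo (0 : ℝ) 1) :
    Filter.Tendsto (fun q : ℝ => K q x t) (nhdsWithin 0 (Set.Ioi 0))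
      (nhds (x ^ t + x ^ (t - 1))) := by
  have hlim := ((tendsto_qpochT (by positivity : 0 ≤ 1 / x) ht.1).const_mul
    (x ^ t / (1 + x))).mul (tendsto_qpochT hx.le (sub_pos.2 ht.2))
  have hvalue : x ^ t / (1 + x) * (1 + 1 / x) * (1 + x) = x ^ t + x ^ (t - 1) := by
    rw [rpow_sub hx, rpow_one]
    field_simp
  rw [← hvalue]
  exact hlim
end

section
/- For 0 < q < 1, the entire function E_q^x = ∑_{n=0}^∞ q^{n(n-1)/2} x^n/[n]! equals the infinite product ∏_{j=0}^∞ (1 + q^j(1-q)x) for all real x, where [n]! = ∏_{k=1}^n (1-q^k)/(1-q). -/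
/-!
Writing `E(x) = ∑ cₙ xⁿ` with `cₙ = q^(n(n-1)/2) / [n]!`, the identity
`cₙ₊₁ (1 - q^(n+1)) = (1 - q) qⁿ cₙ` gives the functional equation
`E(x) = (1 + (1 - q) x) E(q x)`. Iterating it `N` times,
`E(x) = ∏_{j<N} (1 + q^j (1 - q) x) · E(q^N x)`, and letting `N → ∞` the last factor tends to
`E(0) = 1` by continuity of `E` at `0`, while the partial products converge because
`∑ q^j` does.
-/

open Filter Topology

namespace QExp

noncomputable def qFactorial (q : ℝ) (n : ℕ) : ℝ :=
  ∏ k ∈ Finset.range n, ((1 - q ^ (k + 1)) / (1 - q))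

noncomputable def coeff (q : ℝ) (n : ℕ) : ℝ := q ^ (n * (n - 1) / 2) / qFactorial q n

noncomputable def qExp (q x : ℝ) : ℝ := ∑' n, coeff q n * x ^ n

variable {q : ℝ}

lemma one_le_qFactorial (hq0 : 0 < q) (hq1 : q < 1) (n : ℕ) : 1 ≤ qFactorial q n := by
  refine Finset.one_le_prod fun k _ => ?_
  have hqk : q ^ (k + 1) ≤ q := pow_le_of_le_one hq0.le hq1.le k.succ_ne_zero
  rw [le_div_iff₀ (by linarith)]
  linarith

lemma coeff_zero : coeff q 0 = 1 := by simp [coeff, qFactorial]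

lemma coeff_nonneg (hq0 : 0 < q) (hq1 : q < 1) (n : ℕ) : 0 ≤ coeff q n :=
  div_nonneg (pow_nonneg hq0.le _) (zero_le_one.trans (one_le_qFactorial hq0 hq1 n))

lemma coeff_succ_mul (hq0 : 0 < q) (hq1 : q < 1) (n : ℕ) :
    coeff q (n + 1) * (1 - q ^ (n + 1)) = (1 - q) * q ^ n * coeff q n := by
  have hexp : (n + 1) * (n + 1 - 1) / 2 = n * (n - 1) / 2 + n := by
    rw [← Finset.sum_range_id, ← Finset.sum_range_id, Finset.sum_range_succ]
  have hfac : qFactorial q n ≠ 0 := (one_pos.trans_le (one_le_qFactorial hq0 hq1 n)).ne'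
  have hq : 1 - q ≠ 0 := (sub_pos.2 hq1).ne'
  have hqn : 1 - q ^ (n + 1) ≠ 0 := (sub_pos.2 (pow_lt_one₀ hq0.le hq1 n.succ_ne_zero)).ne'
  rw [coeff, coeff, qFactorial, Finset.prod_range_succ, ← qFactorial, hexp, pow_add]
  field_simp

lemma coeff_succ_le (hq0 : 0 < q) (hq1 : q < 1) (n : ℕ) :
    coeff q (n + 1) ≤ q ^ n * coeff q n := by
  have hqn : q ^ (n + 1) ≤ q := pow_le_of_le_one hq0.le hq1.le n.succ_ne_zero
  have hrec := coeff_succ_mul hq0 hq1 n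
  nlinarith [mul_nonneg (pow_nonneg hq0.le n) (coeff_nonneg hq0 hq1 n)]

lemma summable_coeff_mul_pow (hq0 : 0 < q) (hq1 : q < 1) (x : ℝ) :
    Summable fun n => coeff q n * x ^ n := by
  have hsmall : ∀ᶠ n : ℕ in atTop, q ^ n * |x| ≤ 1 / 2 := by
    have := (tendsto_pow_atTop_nhds_zero_of_lt_one hq0.le hq1).mul_const |x|
    rw [zero_mul] at this
    exact this.eventually (eventually_le_nhds one_half_pos)
  refine summable_of_ratio_norm_eventually_le one_half_lt_one ?_
  filter_upwards [hsmall] with n hn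
  have hc := coeff_nonneg hq0 hq1 n
  simp only [norm_mul, norm_pow, Real.norm_eq_abs, abs_of_nonneg hc,
    abs_of_nonneg (coeff_nonneg hq0 hq1 (n + 1)), pow_succ]
  calc coeff q (n + 1) * (|x| ^ n * |x|) ≤ q ^ n * coeff q n * (|x| ^ n * |x|) := by
        gcongr; exact coeff_succ_le hq0 hq1 n
    _ = q ^ n * |x| * (coeff q n * |x| ^ n) := by ring
    _ ≤ 1 / 2 * (coeff q n * |x| ^ n) := by gcongr

lemma qExp_zero : qExp q 0 = 1 := by
  rw [qExp, tsum_eq_single 0 fun n hn => by simp [hn], pow_zero, mul_one, coeff_zero]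

lemma qExp_eq_mul_qExp_mul (hq0 : 0 < q) (hq1 : q < 1) (x : ℝ) :
    qExp q x = (1 + (1 - q) * x) * qExp q (q * x) := by
  have hx := summable_coeff_mul_pow hq0 hq1 x
  have hqx := summable_coeff_mul_pow hq0 hq1 (q * x)
  have hdiff : qExp q x - qExp q (q * x) = (1 - q) * x * qExp q (q * x) := by
    rw [qExp, qExp, ← hx.tsum_sub hqx, (hx.sub hqx).tsum_eq_zero_add, ← tsum_mul_left]
    simp only [pow_zero, mul_one, sub_self, zero_add]
    refine tsum_congr fun n => ?_
    have hrec := coeff_succ_mul hq0 hq1 n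
    calc coeff q (n + 1) * x ^ (n + 1) - coeff q (n + 1) * (q * x) ^ (n + 1)
        = coeff q (n + 1) * (1 - q ^ (n + 1)) * x ^ (n + 1) := by ring
      _ = (1 - q) * x * (coeff q n * (q * x) ^ n) := by rw [hrec]; ring
  linear_combination hdiff

lemma qExp_eq_prod_mul_qExp (hq0 : 0 < q) (hq1 : q < 1) (x : ℝ) (N : ℕ) :
    qExp q x = (∏ j ∈ Finset.range N, (1 + q ^ j * (1 - q) * x)) * qExp q (q ^ N * x) := by
  induction N with
  | zero => simp
  | succ N ih =>
    rw [Finset.prod_range_succ, ih, qExp_eq_mul_qExp_mul hq0 hq1 (q ^ N * x), pow_succ]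
    ring_nf

lemma tendsto_qExp_nhds_zero (hq0 : 0 < q) (hq1 : q < 1) :
    Tendsto (qExp q) (𝓝 0) (𝓝 1) := by
  have hbound : ∀ᶠ y in 𝓝 (0 : ℝ), ∀ n, ‖coeff q n * y ^ n‖ ≤ coeff q n * 1 ^ n := by
    filter_upwards [Metric.closedBall_mem_nhds (0 : ℝ) one_pos] with y hy n
    rw [norm_mul, norm_pow, Real.norm_of_nonneg (coeff_nonneg hq0 hq1 n)]
    exact mul_le_mul_of_nonneg_left (pow_le_pow_left₀ (norm_nonneg y) (by simpa using hy) n)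
      (coeff_nonneg hq0 hq1 n)
  have h : Tendsto (qExp q) (𝓝 0) (𝓝 (qExp q 0)) :=
    tendsto_tsum_of_dominated_convergence (summable_coeff_mul_pow hq0 hq1 1)
      (fun n => ((continuous_pow n).const_mul (coeff q n)).tendsto 0) hbound
  rwa [qExp_zero] at h

end QExp

open QExp

theorem stmt_9 (q x : ℝ) (hq0 : 0 < q) (hq1 : q < 1) :
    (∑' n : ℕ, q ^ (n * (n - 1) / 2) * x ^ n /
        ∏ k ∈ Finset.range n, ((1 - q ^ (k + 1)) / (1 - q))) =
      ∏' j : ℕ, (1 + q ^ j * (1 - q) * x) := by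
  have hseries : (∑' n : ℕ, q ^ (n * (n - 1) / 2) * x ^ n /
      ∏ k ∈ Finset.range n, ((1 - q ^ (k + 1)) / (1 - q))) = qExp q x :=
    tsum_congr fun n => mul_div_right_comm _ _ _
  have hmult : Multipliable fun j : ℕ => 1 + q ^ j * (1 - q) * x :=
    Real.multipliable_one_add_of_summable <| by
      simpa only [mul_assoc] using (summable_geometric_of_lt_one hq0.le hq1).mul_right _
  have htail : Tendsto (fun N : ℕ => qExp q (q ^ N * x)) atTop (𝓝 1) := by
    refine (tendsto_qExp_nhds_zero hq0 hq1).comp ?_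
    simpa using (tendsto_pow_atTop_nhds_zero_of_lt_one hq0.le hq1).mul_const x
  have hlim := hmult.hasProd.tendsto_prod_nat.mul htail
  simp only [← qExp_eq_prod_mul_qExp hq0 hq1, mul_one] at hlim
  rw [hseries, tendsto_nhds_unique tendsto_const_nhds hlim]
end

section
/- For 0 < q < 1 and t, s > 0, the q-beta function defined by the Jackson integral B_q(t,s) = ∫_0^1 x^{t-1} (1-qx)_q^{s-1} d_q x = (1-q) ∑_{j=0}^∞ q^j (q^j)^{t-1} (1-q^{j+1})_q^{s-1} equals Γ_q(t)Γ_q(s)/Γ_q(t+s), where Γ_q(t) = (1-q)_q^{t-1}/(1-q)^{t-1}. -/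
set_option maxHeartbeats 1000000

open Real Filter Finset

noncomputable def qGamma (q t : ℝ) : ℝ :=
  (∏' j : ℕ, ((1 - q ^ (j + 1)) / (1 - q ^ (t + (j : ℝ))))) * (1 - q) ^ (1 - t)

namespace QB

variable {q : ℝ}

noncomputable def B (q x : ℝ) : ℝ := ∏' j : ℕ, (1 - x * q ^ j)

lemma factor_pos (hq0 : 0 < q) (hq1 : q < 1) {x : ℝ} (hx0 : 0 ≤ x) (hx1 : x < 1) (j : ℕ) :
    0 < 1 - x * q ^ j := by
  have h1 : q ^ j ≤ 1 := pow_le_one₀ hq0.le hq1.le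
  nlinarith [pow_pos hq0 j]

lemma summable_log (hq0 : 0 < q) (hq1 : q < 1) {x : ℝ} (hx0 : 0 ≤ x) (hx1 : x < 1) :
    Summable fun j : ℕ => Real.log (1 - x * q ^ j) := by
  rw [← summable_neg_iff]
  refine Summable.of_nonneg_of_le (fun j => ?_) (fun j => ?_)
    (((summable_geometric_of_lt_one hq0.le hq1).mul_left x).mul_left (1 - x)⁻¹)
  ·
    have h := factor_pos hq0 hq1 hx0 hx1 j
    have : Real.log (1 - x * q ^ j) ≤ 0 := by
      apply Real.log_nonpos h.le
      nlinarith [pow_pos hq0 j, pow_le_one₀ hq0.le hq1.le (n := j)]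
    linarith
  ·
    have h := factor_pos hq0 hq1 hx0 hx1 j
    have hlog : Real.log ((1 - x * q ^ j)⁻¹) ≤ (1 - x * q ^ j)⁻¹ - 1 :=
      Real.log_le_sub_one_of_pos (by positivity)
    rw [Real.log_inv] at hlog
    have h2 : (1 - x * q ^ j)⁻¹ - 1 = (x * q ^ j) / (1 - x * q ^ j) := by
      field_simp
      ring
    have h3 : (x * q ^ j) / (1 - x * q ^ j) ≤ (1 - x)⁻¹ * (x * q ^ j) := by
      rw [div_le_iff₀ h]
      have hxj : x * q ^ j ≤ x := by
        nlinarith [pow_le_one₀ hq0.le hq1.le (n := j), pow_pos hq0 j]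
      have hx' : 0 < 1 - x := by linarith
      rw [mul_comm ((1-x)⁻¹) _, mul_assoc]
      have : (1:ℝ) ≤ (1 - x)⁻¹ * (1 - x * q ^ j) := by
        rw [← div_eq_inv_mul, le_div_iff₀ hx']
        linarith
      nlinarith [mul_nonneg hx0 (pow_pos hq0 j).le]
    linarith

lemma hasProdB' (hq0 : 0 < q) (hq1 : q < 1) {x : ℝ} (hx0 : 0 ≤ x) (hx1 : x < 1) :
    HasProd (fun j : ℕ => 1 - x * q ^ j)
      (Real.exp (∑' j : ℕ, Real.log (1 - x * q ^ j))) := by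
  have h := (summable_log hq0 hq1 hx0 hx1).hasSum.rexp
  have hfun : (Real.exp ∘ fun j : ℕ => Real.log (1 - x * q ^ j)) =
      fun j : ℕ => 1 - x * q ^ j :=
    funext fun j => Real.exp_log (factor_pos hq0 hq1 hx0 hx1 j)
  rwa [hfun] at h

lemma hasProdB (hq0 : 0 < q) (hq1 : q < 1) {x : ℝ} (hx0 : 0 ≤ x) (hx1 : x < 1) :
    HasProd (fun j : ℕ => 1 - x * q ^ j) (B q x) := by
  have h := hasProdB' hq0 hq1 hx0 hx1
  rw [B, h.tprod_eq]
  exact h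

lemma B_pos (hq0 : 0 < q) (hq1 : q < 1) {x : ℝ} (hx0 : 0 ≤ x) (hx1 : x < 1) :
    0 < B q x := by
  have h := hasProdB' hq0 hq1 hx0 hx1
  rw [B, h.tprod_eq]
  exact Real.exp_pos _

lemma B_shift (hq0 : 0 < q) (hq1 : q < 1) {x : ℝ} (hx0 : 0 ≤ x) (hx1 : x < 1) :
    B q x = (1 - x) * B q (q * x) := by
  have hqx0 : (0:ℝ) ≤ q * x := by positivity
  have hqx1 : q * x < 1 := by nlinarith
  have h2 : HasProd (fun j : ℕ => 1 - x * q ^ (j + 1)) (B q (q * x)) := by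
    have h := hasProdB hq0 hq1 hqx0 hqx1
    have hfun : (fun j : ℕ => 1 - q * x * q ^ j) = fun j : ℕ => 1 - x * q ^ (j + 1) :=
      funext fun j => by ring
    rwa [hfun] at h
  have h3 := HasProd.zero_mul (f := fun j : ℕ => 1 - x * q ^ j) h2
  simp only [pow_zero, mul_one] at h3
  exact ((hasProdB hq0 hq1 hx0 hx1).unique h3)

lemma B_le_one (hq0 : 0 < q) (hq1 : q < 1) {x : ℝ} (hx0 : 0 ≤ x) (hx1 : x < 1) :
    B q x ≤ 1 := by
  refine le_of_tendsto' (hasProdB hq0 hq1 hx0 hx1).tendsto_prod_nat fun n => ?_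
  refine Finset.prod_le_one (fun j _ => (factor_pos hq0 hq1 hx0 hx1 j).le) fun j _ => ?_
  nlinarith [pow_pos hq0 j, mul_nonneg hx0 (pow_pos hq0 j).le]

lemma B_anti (hq0 : 0 < q) (hq1 : q < 1) {x y : ℝ} (hx0 : 0 ≤ x) (hxy : x ≤ y) (hy1 : y < 1) :
    B q y ≤ B q x := by
  have hy0 : 0 ≤ y := hx0.trans hxy
  have hx1 : x < 1 := lt_of_le_of_lt hxy hy1
  refine le_of_tendsto_of_tendsto' (hasProdB hq0 hq1 hy0 hy1).tendsto_prod_nat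
    (hasProdB hq0 hq1 hx0 hx1).tendsto_prod_nat fun n => ?_
  refine Finset.prod_le_prod (fun j _ => (factor_pos hq0 hq1 hy0 hy1 j).le) fun j _ => ?_
  nlinarith [pow_pos hq0 j]

lemma B_lower (hq0 : 0 < q) (hq1 : q < 1) {x : ℝ} (hx0 : 0 ≤ x) (hx1 : x < 1) :
    1 - x / (1 - q) ≤ B q x := by
  refine ge_of_tendsto' (hasProdB hq0 hq1 hx0 hx1).tendsto_prod_nat fun n => ?_
  have h1 : 1 - ∑ j ∈ Finset.range n, x * q ^ j ≤ ∏ j ∈ Finset.range n, (1 - x * q ^ j) := by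
    induction n with
    | zero => simp
    | succ n ih =>
      rw [Finset.prod_range_succ, Finset.sum_range_succ]
      have hp : 0 ≤ ∏ j ∈ Finset.range n, (1 - x * q ^ j) :=
        Finset.prod_nonneg fun j _ => (factor_pos hq0 hq1 hx0 hx1 j).le
      have hp1 : ∏ j ∈ Finset.range n, (1 - x * q ^ j) ≤ 1 :=
        Finset.prod_le_one (fun j _ => (factor_pos hq0 hq1 hx0 hx1 j).le) fun j _ => by
          nlinarith [pow_pos hq0 j, mul_nonneg hx0 (pow_pos hq0 j).le]
      have hf := (factor_pos hq0 hq1 hx0 hx1 n)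
      nlinarith [mul_nonneg hx0 (pow_pos hq0 n).le]
  refine le_trans ?_ h1
  have h2 : ∑ j ∈ Finset.range n, x * q ^ j ≤ x / (1 - q) := by
    rw [← Finset.mul_sum]
    have hsum : ∑ j ∈ Finset.range n, q ^ j ≤ (1 - q)⁻¹ := by
      have h1 : ∑ j ∈ Finset.range n, q ^ j ≤ ∑' j : ℕ, q ^ j :=
        Summable.sum_le_tsum _ (fun j _ => (pow_pos hq0 j).le)
          (summable_geometric_of_lt_one hq0.le hq1)
      rwa [tsum_geometric_of_lt_one hq0.le hq1] at h1
    calc x * ∑ j ∈ Finset.range n, q ^ j ≤ x * (1 - q)⁻¹ :=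
          mul_le_mul_of_nonneg_left hsum hx0
      _ = x / (1 - q) := by rw [div_eq_mul_inv]
  linarith

lemma hasProd_div {f g : ℕ → ℝ} {a b : ℝ} (hf : HasProd f a) (hg : HasProd g b)
    (hb : b ≠ 0) : HasProd (fun j => f j / g j) (a / b) := by
  have h1 : Tendsto (fun s : Finset ℕ => ∏ i ∈ s, f i) atTop (nhds a) := hf
  have h2 : Tendsto (fun s : Finset ℕ => ∏ i ∈ s, g i) atTop (nhds b) := hg
  have h := h1.div h2 hb
  have : HasProd (fun j => f j / g j) (a / b) := by
    have h' : Tendsto (fun s : Finset ℕ => ∏ i ∈ s, (f i / g i)) atTop (nhds (a / b)) := by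
      simpa only [Finset.prod_div_distrib, Pi.div_def] using h
    exact h'
  exact this

noncomputable def a (q s : ℝ) (j : ℕ) : ℝ := B q (q ^ (j + 1)) / B q (q ^ s * q ^ j)

section coeffs

variable {s : ℝ} (hq0 : 0 < q) (hq1 : q < 1) (hs : 0 < s)
include hq0 hq1 hs

lemma qs_mem : 0 ≤ q ^ s ∧ q ^ s < 1 :=
  ⟨(Real.rpow_pos_of_pos hq0 s).le, Real.rpow_lt_one hq0.le hq1 hs⟩

lemma qsj_mem (j : ℕ) : 0 ≤ q ^ s * q ^ j ∧ q ^ s * q ^ j < 1 := by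
  obtain ⟨h0, h1⟩ := qs_mem hq0 hq1 hs
  constructor
  · positivity
  · nlinarith [pow_le_one₀ hq0.le hq1.le (n := j), pow_pos hq0 j]

lemma qj_mem (j : ℕ) : 0 ≤ (q ^ (j + 1) : ℝ) ∧ (q ^ (j + 1) : ℝ) < 1 :=
  ⟨(pow_pos hq0 _).le, pow_lt_one₀ hq0.le hq1 (Nat.succ_ne_zero j)⟩

lemma a_pos (j : ℕ) : 0 < a q s j := by
  obtain ⟨h0, h1⟩ := qj_mem hq0 hq1 hs j
  obtain ⟨h2, h3⟩ := qsj_mem hq0 hq1 hs j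
  exact div_pos (B_pos hq0 hq1 h0 h1) (B_pos hq0 hq1 h2 h3)

lemma a_le (j : ℕ) : a q s j ≤ (B q (q ^ s))⁻¹ := by
  obtain ⟨h0, h1⟩ := qj_mem hq0 hq1 hs j
  obtain ⟨h2, h3⟩ := qsj_mem hq0 hq1 hs j
  obtain ⟨hs0, hs1⟩ := qs_mem hq0 hq1 hs
  have hB1 : B q (q ^ (j + 1)) ≤ 1 := B_le_one hq0 hq1 h0 h1
  have hB2 : B q (q ^ s) ≤ B q (q ^ s * q ^ j) := by
    refine B_anti hq0 hq1 h2 ?_ hs1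
    nlinarith [pow_le_one₀ hq0.le hq1.le (n := j), Real.rpow_pos_of_pos hq0 s]
  have hBpos : 0 < B q (q ^ s) := B_pos hq0 hq1 hs0 hs1
  have hBpos2 : 0 < B q (q ^ s * q ^ j) := B_pos hq0 hq1 h2 h3
  unfold a
  rw [div_le_iff₀ hBpos2]
  calc B q (q ^ (j + 1)) ≤ 1 := hB1
    _ ≤ (B q (q ^ s))⁻¹ * B q (q ^ s * q ^ j) := by
        rw [← div_eq_inv_mul, le_div_iff₀ hBpos]
        linarith

lemma a_rec (j : ℕ) :
    (1 - q ^ (j + 1)) * a q s (j + 1) = (1 - q ^ s * q ^ j) * a q s j := by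
  obtain ⟨h0, h1⟩ := qj_mem hq0 hq1 hs j
  obtain ⟨h2, h3⟩ := qsj_mem hq0 hq1 hs j
  obtain ⟨h0', h1'⟩ := qj_mem hq0 hq1 hs (j + 1)
  obtain ⟨h2', h3'⟩ := qsj_mem hq0 hq1 hs (j + 1)
  have e1 : B q (q ^ (j + 1)) = (1 - q ^ (j + 1)) * B q (q ^ (j + 2)) := by
    have := B_shift hq0 hq1 h0 h1
    rwa [show q * q ^ (j + 1) = q ^ (j + 2) by ring] at this
  have e2 : B q (q ^ s * q ^ j) = (1 - q ^ s * q ^ j) * B q (q ^ s * q ^ (j + 1)) := by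
    have := B_shift hq0 hq1 h2 h3
    rwa [show q * (q ^ s * q ^ j) = q ^ s * q ^ (j + 1) by ring] at this
  have hne1 : (1:ℝ) - q ^ s * q ^ j ≠ 0 := by linarith
  have hne2 : B q (q ^ s * q ^ (j + 1)) ≠ 0 := (B_pos hq0 hq1 h2' h3').ne'
  have hne3 : B q (q ^ s * q ^ j) ≠ 0 := (B_pos hq0 hq1 h2 h3).ne'
  unfold a
  rw [show j + 1 + 1 = j + 2 from rfl, e1, e2]
  field_simp

end coeffs

noncomputable def S (q s x : ℝ) : ℝ := ∑' j : ℕ, x ^ j * a q s j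

section sums

variable {s x : ℝ} (hq0 : 0 < q) (hq1 : q < 1) (hs : 0 < s)
include hq0 hq1 hs

lemma summable_S (hx0 : 0 ≤ x) (hx1 : x < 1) :
    Summable fun j : ℕ => x ^ j * a q s j := by
  refine Summable.of_nonneg_of_le (fun j => ?_) (fun j => ?_)
    ((summable_geometric_of_lt_one hx0 hx1).mul_right (B q (q ^ s))⁻¹)
  · exact mul_nonneg (pow_nonneg hx0 j) (a_pos hq0 hq1 hs j).le
  · exact mul_le_mul_of_nonneg_left (a_le hq0 hq1 hs j) (pow_nonneg hx0 j)

lemma summable_u (hx0 : 0 ≤ x) (hx1 : x < 1) :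
    Summable fun j : ℕ => (1 - q ^ j) * a q s j * x ^ j := by
  refine Summable.of_nonneg_of_le (fun j => ?_) (fun j => ?_)
    ((summable_geometric_of_lt_one hx0 hx1).mul_right (B q (q ^ s))⁻¹)
  · have ha := a_pos hq0 hq1 hs j
    have h1 : q ^ j ≤ 1 := pow_le_one₀ hq0.le hq1.le
    have hx := pow_nonneg hx0 j
    have h6 : (0:ℝ) ≤ 1 - q ^ j := by linarith
    exact mul_nonneg (mul_nonneg h6 ha.le) hx
  · have h1 : q ^ j ≤ 1 := pow_le_one₀ hq0.le hq1.le
    have h2 := a_pos hq0 hq1 hs j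
    have h3 := a_le hq0 hq1 hs j
    have h4 := pow_nonneg hx0 j
    have h5 := pow_pos hq0 j
    have h7 : (1 - q ^ j) * a q s j ≤ a q s j := by nlinarith
    calc (1 - q ^ j) * a q s j * x ^ j ≤ a q s j * x ^ j :=
          mul_le_mul_of_nonneg_right h7 h4
      _ = x ^ j * a q s j := by ring
      _ ≤ x ^ j * (B q (q ^ s))⁻¹ := mul_le_mul_of_nonneg_left h3 h4

lemma func_eq (hx0 : 0 ≤ x) (hx1 : x < 1) :
    (1 - x) * S q s x = (1 - q ^ s * x) * S q s (q * x) := by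
  have hqx0 : (0:ℝ) ≤ q * x := by positivity
  have hqx1 : q * x < 1 := by nlinarith
  have hSx := summable_S hq0 hq1 hs hx0 hx1
  have hSqx := summable_S hq0 hq1 hs hqx0 hqx1
  have hu := summable_u hq0 hq1 hs hx0 hx1
  have hu' : Summable fun j : ℕ => (1 - q ^ (j + 1)) * a q s (j + 1) * x ^ (j + 1) :=
    (summable_nat_add_iff 1).mpr hu
  have key : ∀ j : ℕ,
      (1 - x) * (x ^ j * a q s j) - (1 - q ^ s * x) * ((q * x) ^ j * a q s j)
        = (1 - q ^ j) * a q s j * x ^ j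
          - (1 - q ^ (j + 1)) * a q s (j + 1) * x ^ (j + 1) := by
    intro j
    have h := a_rec hq0 hq1 hs j
    linear_combination (x ^ (j + 1)) * h
  have hdiff :
      (1 - x) * S q s x - (1 - q ^ s * x) * S q s (q * x)
        = ∑' j : ℕ, ((1 - q ^ j) * a q s j * x ^ j
            - (1 - q ^ (j + 1)) * a q s (j + 1) * x ^ (j + 1)) := by
    unfold S
    rw [← tsum_mul_left, ← tsum_mul_left, ← Summable.tsum_sub (hSx.mul_left _) (hSqx.mul_left _)]
    exact tsum_congr key
  have htel :
      (∑' j : ℕ, ((1 - q ^ j) * a q s j * x ^ j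
          - (1 - q ^ (j + 1)) * a q s (j + 1) * x ^ (j + 1))) = 0 := by
    rw [Summable.tsum_sub hu hu']
    have h0 := Summable.tsum_eq_zero_add hu
    simp only [pow_zero, one_mul, mul_one] at h0 ⊢
    rw [h0]
    ring
  rw [htel] at hdiff
  linarith

end sums

section limits

variable {s x : ℝ} (hq0 : 0 < q) (hq1 : q < 1) (hs : 0 < s)
include hq0 hq1 hs

lemma S_eq (hx0 : 0 < x) (hx1 : x < 1) :
    S q s x * B q x / B q (q ^ s * x) = B q q / B q (q ^ s) := by
  obtain ⟨hs0, hs1⟩ := qs_mem hq0 hq1 hs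
  have hxn0 : ∀ n : ℕ, (0:ℝ) < x * q ^ n := fun n => by positivity
  have hxnx : ∀ n : ℕ, x * q ^ n ≤ x := fun n => by
    nlinarith [pow_le_one₀ hq0.le hq1.le (n := n), pow_pos hq0 n]
  have hxn1 : ∀ n : ℕ, x * q ^ n < 1 := fun n => lt_of_le_of_lt (hxnx n) hx1
  have hcn0 : ∀ n : ℕ, (0:ℝ) ≤ q ^ s * (x * q ^ n) := fun n => by positivity
  have hcn1 : ∀ n : ℕ, q ^ s * (x * q ^ n) < 1 := fun n => by
    nlinarith [hxn0 n, hxn1 n]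
  -- the step
  have hstep : ∀ n : ℕ,
      S q s (x * q ^ n) * B q (x * q ^ n) / B q (q ^ s * (x * q ^ n))
        = S q s (x * q ^ (n + 1)) * B q (x * q ^ (n + 1))
            / B q (q ^ s * (x * q ^ (n + 1))) := by
    intro n
    have e1 := func_eq hq0 hq1 hs (hxn0 n).le (hxn1 n)
    rw [show q * (x * q ^ n) = x * q ^ (n + 1) by ring] at e1
    have e2 := B_shift hq0 hq1 (hxn0 n).le (hxn1 n)
    rw [show q * (x * q ^ n) = x * q ^ (n + 1) by ring] at e2
    have e3 := B_shift hq0 hq1 (hcn0 n) (hcn1 n)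
    rw [show q * (q ^ s * (x * q ^ n)) = q ^ s * (x * q ^ (n + 1)) by ring] at e3
    have hc : (1:ℝ) - q ^ s * (x * q ^ n) ≠ 0 := by
      have := hcn1 n; linarith
    rw [e2, e3]
    calc S q s (x * q ^ n) * ((1 - x * q ^ n) * B q (x * q ^ (n + 1)))
          / ((1 - q ^ s * (x * q ^ n)) * B q (q ^ s * (x * q ^ (n + 1))))
        = (1 - x * q ^ n) * S q s (x * q ^ n) * B q (x * q ^ (n + 1))
          / ((1 - q ^ s * (x * q ^ n)) * B q (q ^ s * (x * q ^ (n + 1)))) := by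
          ring_nf
      _ = (1 - q ^ s * (x * q ^ n)) * S q s (x * q ^ (n + 1)) * B q (x * q ^ (n + 1))
          / ((1 - q ^ s * (x * q ^ n)) * B q (q ^ s * (x * q ^ (n + 1)))) := by
          rw [e1]
      _ = S q s (x * q ^ (n + 1)) * B q (x * q ^ (n + 1))
          / B q (q ^ s * (x * q ^ (n + 1))) := by
          rw [mul_assoc, mul_div_mul_left _ _ hc]
  have hconst : ∀ n : ℕ,
      S q s (x * q ^ 0) * B q (x * q ^ 0) / B q (q ^ s * (x * q ^ 0))
        = S q s (x * q ^ n) * B q (x * q ^ n) / B q (q ^ s * (x * q ^ n)) := by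
    intro n
    induction n with
    | zero => rfl
    | succ n ih => rw [ih, hstep n]
  -- limits
  have hx0n : Tendsto (fun n : ℕ => x * q ^ n) atTop (nhds 0) := by
    have h := tendsto_pow_atTop_nhds_zero_of_lt_one hq0.le hq1
    have := h.const_mul x
    simpa using this
  set C : ℝ := (B q (q ^ s))⁻¹ with hC
  have hS : Tendsto (fun n : ℕ => S q s (x * q ^ n)) atTop (nhds (a q s 0)) := by
    have hlow : ∀ n : ℕ, a q s 0 ≤ S q s (x * q ^ n) := by
      intro n
      have hsum := summable_S hq0 hq1 hs (hxn0 n).le (hxn1 n)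
      have h := Summable.le_tsum hsum 0 fun j _ =>
        mul_nonneg (pow_nonneg (hxn0 n).le j) (a_pos hq0 hq1 hs j).le
      simpa [S] using h
    have hup : ∀ n : ℕ, S q s (x * q ^ n)
        ≤ a q s 0 + (1 - x)⁻¹ * (x * q ^ n * C) := by
      intro n
      set y := x * q ^ n with hy
      have hy0 : 0 < y := hxn0 n
      have hy1 : y < 1 := hxn1 n
      have hsum := summable_S hq0 hq1 hs hy0.le hy1
      have hsum' : Summable fun j : ℕ => y ^ (j + 1) * a q s (j + 1) :=
        (summable_nat_add_iff 1).mpr hsum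
      have hsplit := Summable.tsum_eq_zero_add hsum
      have htail : (∑' j : ℕ, y ^ (j + 1) * a q s (j + 1))
          ≤ (1 - y)⁻¹ * (y * C) := by
        have hgeo : Summable fun j : ℕ => y ^ j * (y * C) :=
          (summable_geometric_of_lt_one hy0.le hy1).mul_right _
        have hle : ∀ j : ℕ, y ^ (j + 1) * a q s (j + 1) ≤ y ^ j * (y * C) := by
          intro j
          have h1 := a_le hq0 hq1 hs (j + 1)
          have h2 : (0:ℝ) ≤ y ^ (j + 1) := pow_nonneg hy0.le _
          calc y ^ (j + 1) * a q s (j + 1) ≤ y ^ (j + 1) * C :=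
                mul_le_mul_of_nonneg_left h1 h2
            _ = y ^ j * (y * C) := by ring
        calc (∑' j : ℕ, y ^ (j + 1) * a q s (j + 1))
            ≤ ∑' j : ℕ, y ^ j * (y * C) := Summable.tsum_le_tsum hle hsum' hgeo
          _ = (∑' j : ℕ, y ^ j) * (y * C) := tsum_mul_right
          _ = (1 - y)⁻¹ * (y * C) := by
              rw [tsum_geometric_of_lt_one hy0.le hy1]
      have hCpos : 0 ≤ C := by
        rw [hC]
        exact (inv_pos.mpr (B_pos hq0 hq1 hs0 hs1)).le
      have hmon : (1 - y)⁻¹ * (y * C) ≤ (1 - x)⁻¹ * (y * C) := by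
        have h1 : (1:ℝ) - x ≤ 1 - y := by
          have := hxnx n; rw [hy]; linarith
        have h2 : (0:ℝ) < 1 - x := by linarith
        have h3 : (1 - y)⁻¹ ≤ (1 - x)⁻¹ := by
          apply inv_anti₀ h2 h1
        exact mul_le_mul_of_nonneg_right h3 (by positivity)
      have h0 : S q s y = a q s 0 + ∑' j : ℕ, y ^ (j + 1) * a q s (j + 1) := by
        rw [S, hsplit]; simp
      rw [h0]
      have := le_trans htail hmon
      linarith
    have hupT : Tendsto (fun n : ℕ => a q s 0 + (1 - x)⁻¹ * (x * q ^ n * C))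
        atTop (nhds (a q s 0)) := by
      have h1 := (hx0n.mul_const C).const_mul (1 - x)⁻¹
      have h2 := h1.const_add (a q s 0)
      simpa using h2
    exact tendsto_of_tendsto_of_tendsto_of_le_of_le tendsto_const_nhds hupT hlow hup
  have hB1 : Tendsto (fun n : ℕ => B q (x * q ^ n)) atTop (nhds 1) := by
    have hlowT : Tendsto (fun n : ℕ => 1 - (x * q ^ n) / (1 - q)) atTop (nhds 1) := by
      have h1 := hx0n.div_const (1 - q)
      have h2 := (tendsto_const_nhds (x := (1:ℝ)) (f := atTop (α := ℕ))).sub h1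
      simpa using h2
    refine tendsto_of_tendsto_of_tendsto_of_le_of_le hlowT tendsto_const_nhds
      (fun n => B_lower hq0 hq1 (hxn0 n).le (hxn1 n))
      (fun n => B_le_one hq0 hq1 (hxn0 n).le (hxn1 n))
  have hB2 : Tendsto (fun n : ℕ => B q (q ^ s * (x * q ^ n))) atTop (nhds 1) := by
    have hz : Tendsto (fun n : ℕ => q ^ s * (x * q ^ n)) atTop (nhds 0) := by
      have := hx0n.const_mul (q ^ s)
      simpa using this
    have hlowT : Tendsto (fun n : ℕ => 1 - (q ^ s * (x * q ^ n)) / (1 - q))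
        atTop (nhds 1) := by
      have h1 := hz.div_const (1 - q)
      have h2 := (tendsto_const_nhds (x := (1:ℝ)) (f := atTop (α := ℕ))).sub h1
      simpa using h2
    refine tendsto_of_tendsto_of_tendsto_of_le_of_le hlowT tendsto_const_nhds
      (fun n => B_lower hq0 hq1 (hcn0 n) (hcn1 n))
      (fun n => B_le_one hq0 hq1 (hcn0 n) (hcn1 n))
  have hRlim : Tendsto (fun n : ℕ =>
      S q s (x * q ^ n) * B q (x * q ^ n) / B q (q ^ s * (x * q ^ n)))
      atTop (nhds (a q s 0 * 1 / 1)) := (hS.mul hB1).div hB2 one_ne_zero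
  have hRconst : Tendsto (fun n : ℕ =>
      S q s (x * q ^ n) * B q (x * q ^ n) / B q (q ^ s * (x * q ^ n)))
      atTop (nhds (S q s (x * q ^ 0) * B q (x * q ^ 0) / B q (q ^ s * (x * q ^ 0)))) := by
    have heq : (fun n : ℕ =>
        S q s (x * q ^ n) * B q (x * q ^ n) / B q (q ^ s * (x * q ^ n)))
          = fun _ : ℕ =>
        S q s (x * q ^ 0) * B q (x * q ^ 0) / B q (q ^ s * (x * q ^ 0)) :=
      funext fun n => (hconst n).symm
    rw [heq]
    exact tendsto_const_nhds
  have hfin := tendsto_nhds_unique hRconst hRlim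
  rw [mul_one, div_one] at hfin
  simp only [pow_zero, mul_one] at hfin
  rw [hfin]
  unfold a
  simp

end limits

end QB

namespace QB

section final

variable {q t s : ℝ} (hq0 : 0 < q) (hq1 : q < 1)
include hq0 hq1

lemma term_eq (hs : 0 < s) (j : ℕ) :
    (q ^ j : ℝ) * ((q ^ j : ℝ) ^ (t - 1)) * qpochT q (-(q ^ (j + 1))) (s - 1)
      = (q ^ t) ^ j * a q s j := by
  have hpow : (q ^ j : ℝ) * ((q ^ j : ℝ) ^ (t - 1)) = (q ^ t) ^ j := by
    rw [← Real.rpow_natCast q j, ← Real.rpow_mul hq0.le, ← Real.rpow_add hq0,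
      show (j : ℝ) + (j : ℝ) * (t - 1) = t * (j : ℝ) by ring,
      Real.rpow_mul hq0.le, Real.rpow_natCast]
  have hqT : qpochT q (-(q ^ (j + 1))) (s - 1) = a q s j := by
    unfold qpochT qpochInf a B
    have hnum : (∏' i : ℕ, (1 + q ^ i * -(q ^ (j + 1))))
        = ∏' i : ℕ, (1 - q ^ (j + 1) * q ^ i) :=
      tprod_congr fun i => by ring
    have hb : q ^ (s - 1) * q ^ (j + 1) = q ^ s * q ^ j := by
      rw [pow_succ, show q ^ (s-1) * (q ^ j * q) = q ^ (s-1) * q ^ (1:ℝ) * q ^ j by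
        rw [Real.rpow_one]; ring, ← Real.rpow_add hq0]
      norm_num
    have hden : (∏' i : ℕ, (1 + q ^ i * (q ^ (s - 1) * -(q ^ (j + 1)))))
        = ∏' i : ℕ, (1 - q ^ s * q ^ j * q ^ i) := by
      refine tprod_congr fun i => ?_
      calc 1 + q ^ i * (q ^ (s - 1) * -(q ^ (j + 1)))
          = 1 - q ^ (s - 1) * q ^ (j + 1) * q ^ i := by ring
        _ = 1 - q ^ s * q ^ j * q ^ i := by rw [hb]
    rw [hnum, hden]
  rw [hqT, ← hpow]

lemma qGamma_eq (hu : 0 < u) :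
    qGamma q u = B q q / B q (q ^ u) * (1 - q) ^ (1 - u) := by
  have hq01 : (0:ℝ) ≤ q := hq0.le
  have hu0 : (0:ℝ) ≤ q ^ u := (Real.rpow_pos_of_pos hq0 u).le
  have hu1 : q ^ u < 1 := Real.rpow_lt_one hq0.le hq1 hu
  have hf : HasProd (fun j : ℕ => 1 - (q ^ (j + 1) : ℝ)) (B q q) := by
    have h := hasProdB hq0 hq1 hq01 hq1
    have : (fun j : ℕ => 1 - q * q ^ j) = fun j : ℕ => 1 - (q ^ (j + 1) : ℝ) :=
      funext fun j => by ring
    rwa [this] at h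
  have hg : HasProd (fun j : ℕ => 1 - q ^ (u + (j : ℝ))) (B q (q ^ u)) := by
    have h := hasProdB hq0 hq1 hu0 hu1
    have : (fun j : ℕ => 1 - q ^ u * q ^ j) = fun j : ℕ => 1 - q ^ (u + (j : ℝ)) :=
      funext fun j => by rw [Real.rpow_add hq0, Real.rpow_natCast]
    rwa [this] at h
  have hgne : B q (q ^ u) ≠ 0 := (B_pos hq0 hq1 hu0 hu1).ne'
  unfold qGamma
  rw [(hasProd_div hf hg hgne).tprod_eq]

end final

end QB

theorem stmt_12 (q t s : ℝ) (hq0 : 0 < q) (hq1 : q < 1) (ht : 0 < t) (hs : 0 < s) :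
    (1 - q) * ∑' j : ℕ, (q ^ j : ℝ) * ((q ^ j : ℝ) ^ (t - 1)) * qpochT q (-(q ^ (j + 1))) (s - 1) =
      qGamma q t * qGamma q s / qGamma q (t + s) := by
  classical
  have hts : 0 < t + s := by linarith
  have hc : (0:ℝ) < 1 - q := by linarith
  have hqt0 : 0 < q ^ t := Real.rpow_pos_of_pos hq0 t
  have hqt1 : q ^ t < 1 := Real.rpow_lt_one hq0.le hq1 ht
  have hqs0 : 0 < q ^ s := Real.rpow_pos_of_pos hq0 s
  have hqs1 : q ^ s < 1 := Real.rpow_lt_one hq0.le hq1 hs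
  have hsum : (∑' j : ℕ, (q ^ j : ℝ) * ((q ^ j : ℝ) ^ (t - 1)) *
      qpochT q (-(q ^ (j + 1))) (s - 1)) = QB.S q s (q ^ t) :=
    tsum_congr fun j => QB.term_eq hq0 hq1 hs j
  rw [hsum, QB.qGamma_eq hq0 hq1 ht, QB.qGamma_eq hq0 hq1 hs, QB.qGamma_eq hq0 hq1 hts]
  have hmain := QB.S_eq hq0 hq1 hs hqt0 hqt1
  have hq_ts : q ^ (t + s) = q ^ s * q ^ t := by
    rw [Real.rpow_add hq0]; ring
  rw [hq_ts]
  have hpow : (1 - q) ^ (1 - t) * (1 - q) ^ (1 - s)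
      = (1 - q) * (1 - q) ^ (1 - (t + s)) := by
    rw [← Real.rpow_add hc]
    nth_rewrite 2 [← Real.rpow_one (1 - q)]
    rw [← Real.rpow_add hc]
    congr 1
    ring
  have hBt : QB.B q (q ^ t) ≠ 0 := (QB.B_pos hq0 hq1 hqt0.le hqt1).ne'
  have hBs : QB.B q (q ^ s) ≠ 0 := (QB.B_pos hq0 hq1 hqs0.le hqs1).ne'
  have hst0 : (0:ℝ) ≤ q ^ s * q ^ t := by positivity
  have hst1 : q ^ s * q ^ t < 1 := by nlinarith
  have hBst : QB.B q (q ^ s * q ^ t) ≠ 0 := (QB.B_pos hq0 hq1 hst0 hst1).ne'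
  have hBst' : QB.B q (q ^ t * q ^ s) ≠ 0 := by rw [mul_comm]; exact hBst
  have hG : QB.B q q ≠ 0 := (QB.B_pos hq0 hq1 hq0.le hq1).ne'
  have hct : (1 - q) ^ (1 - t) ≠ 0 := (Real.rpow_pos_of_pos hc _).ne'
  have hcs : (1 - q) ^ (1 - s) ≠ 0 := (Real.rpow_pos_of_pos hc _).ne'
  have hcts : (1 - q) ^ (1 - (t + s)) ≠ 0 := (Real.rpow_pos_of_pos hc _).ne'
  field_simp at hmain ⊢
  linear_combination (QB.B q q * (1 - q) ^ (1 - t) * (1 - q) ^ (1 - s)) * hmain +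
    (-(QB.B q q) * QB.S q s (q ^ t) * QB.B q (q ^ t) * QB.B q (q ^ s)) * hpow +
    ((QB.B q q - 1) * (q - 1) * (1 - q) ^ (1 - (t + s))) * hmain +
    ((QB.B q q - 1) * QB.B q q * QB.B q (q ^ t * q ^ s)) * hpow
end

section
/- For 0 < q < 1, A > 0, and every positive integer n, one has q^{n(n-1)/2} · ∫_0^{∞/A(1-q)} x^{n-1} e_q^{-x} d_q x = [n-1]! = Γ_q(n), independently of A. -/
open Filter Topology

noncomputable def qExpNeg (q x : ℝ) : ℝ := ∏' j : ℕ, (1 + q ^ j * (1 - q) * x)⁻¹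

noncomputable def jackson (q B : ℝ) (f : ℝ → ℝ) : ℝ :=
  (1 - q) * ∑' n : ℤ, (q ^ n / B) * f (q ^ n / B)

noncomputable def qGammaTilde (q A t : ℝ) : ℝ :=
  jackson q (A * (1 - q)) (fun x => x ^ (t - 1) * qExpNeg q x)

lemma hasProd_of_pos_of_summable_log (f : ℕ → ℝ) (hf : ∀ j, 0 < f j)
    (h : Summable fun j => Real.log (f j)) :
    HasProd f (Real.exp (∑' j, Real.log (f j))) := by
  have h2 : Filter.Tendsto (fun s : Finset ℕ => Real.exp (∑ j ∈ s, Real.log (f j)))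
      Filter.atTop (nhds (Real.exp (∑' j, Real.log (f j)))) :=
    (Real.continuous_exp.continuousAt).tendsto.comp h.hasSum
  refine h2.congr fun s => ?_
  rw [Real.exp_sum]
  exact Finset.prod_congr rfl fun j _ => Real.exp_log (hf j)

section E
variable {q : ℝ} (hq0 : 0 < q) (hq1 : q < 1)
include hq0 hq1

lemma factor_pos {x : ℝ} (hx : 0 ≤ x) (j : ℕ) : 0 < 1 + q ^ j * (1 - q) * x := by
  have := mul_nonneg (mul_nonneg (pow_nonneg hq0.le j) (by linarith : (0:ℝ) ≤ 1 - q)) hx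
  linarith

lemma qExp_summable_log {x : ℝ} (hx : 0 ≤ x) :
    Summable fun j => Real.log ((1 + q ^ j * (1 - q) * x)⁻¹) := by
  have hg : Summable fun j : ℕ => ((1 - q) * x) * q ^ j :=
    (summable_geometric_of_lt_one hq0.le hq1).mul_left _
  refine Summable.of_abs (hg.abs.of_nonneg_of_le (fun j => abs_nonneg _) fun j => ?_)
  rw [Real.log_inv, abs_neg, abs_of_nonneg, abs_of_nonneg]
  · calc Real.log (1 + q ^ j * (1 - q) * x) ≤ (1 + q ^ j * (1 - q) * x) - 1 :=
        Real.log_le_sub_one_of_pos (factor_pos hq0 hq1 hx j)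
      _ = (1 - q) * x * q ^ j := by ring
  · exact mul_nonneg (mul_nonneg (by linarith : (0:ℝ) ≤ 1-q) hx) (pow_nonneg hq0.le j)
  · apply Real.log_nonneg
    have := mul_nonneg (mul_nonneg (pow_nonneg hq0.le j) (by linarith : (0:ℝ) ≤ 1 - q)) hx
    linarith

lemma qExp_eq_exp {x : ℝ} (hx : 0 ≤ x) :
    qExpNeg q x = Real.exp (∑' j, Real.log ((1 + q ^ j * (1 - q) * x)⁻¹)) := by
  have hf : ∀ j, 0 < (1 + q ^ j * (1 - q) * x)⁻¹ := fun j => inv_pos.2 (factor_pos hq0 hq1 hx j)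
  exact (hasProd_of_pos_of_summable_log _ hf (qExp_summable_log hq0 hq1 hx)).tprod_eq

lemma qExp_hasProd {x : ℝ} (hx : 0 ≤ x) :
    HasProd (fun j : ℕ => (1 + q ^ j * (1 - q) * x)⁻¹) (qExpNeg q x) := by
  have hf : ∀ j, 0 < (1 + q ^ j * (1 - q) * x)⁻¹ := fun j => inv_pos.2 (factor_pos hq0 hq1 hx j)
  rw [qExp_eq_exp hq0 hq1 hx]
  exact hasProd_of_pos_of_summable_log _ hf (qExp_summable_log hq0 hq1 hx)

lemma qExp_pos {x : ℝ} (hx : 0 ≤ x) : 0 < qExpNeg q x := by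
  rw [qExp_eq_exp hq0 hq1 hx]; exact Real.exp_pos _

lemma qExp_tendsto_prod {x : ℝ} (hx : 0 ≤ x) :
    Tendsto (fun N : ℕ => ∏ j ∈ Finset.range N, (1 + q ^ j * (1 - q) * x)⁻¹)
      atTop (𝓝 (qExpNeg q x)) :=
  (qExp_hasProd hq0 hq1 hx).tendsto_prod_nat

end E

section E2
variable {q : ℝ} (hq0 : 0 < q) (hq1 : q < 1)
include hq0 hq1

lemma qExp_le_prodRange {x : ℝ} (hx : 0 ≤ x) (K : ℕ) :
    qExpNeg q x ≤ ∏ j ∈ Finset.range K, (1 + q ^ j * (1 - q) * x)⁻¹ := by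
  refine le_of_tendsto (qExp_tendsto_prod hq0 hq1 hx) ?_
  filter_upwards [eventually_ge_atTop K] with N hN
  obtain ⟨M, rfl⟩ := Nat.exists_eq_add_of_le hN
  rw [Finset.prod_range_add]
  have h1 : ∏ j ∈ Finset.range M, (1 + q ^ (K + j) * (1 - q) * x)⁻¹ ≤ 1 := by
    refine Finset.prod_le_one (fun j _ => (inv_pos.2 (factor_pos hq0 hq1 hx _)).le) fun j _ => ?_
    rw [inv_le_one_iff₀]
    right
    have := mul_nonneg (mul_nonneg (pow_nonneg hq0.le (K + j)) (by linarith : (0:ℝ) ≤ 1 - q)) hx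
    linarith
  have h2 : 0 ≤ ∏ j ∈ Finset.range K, (1 + q ^ j * (1 - q) * x)⁻¹ :=
    Finset.prod_nonneg fun j _ => (inv_pos.2 (factor_pos hq0 hq1 hx _)).le
  calc (∏ j ∈ Finset.range K, (1 + q ^ j * (1 - q) * x)⁻¹) *
        ∏ j ∈ Finset.range M, (1 + q ^ (K + j) * (1 - q) * x)⁻¹
      ≤ (∏ j ∈ Finset.range K, (1 + q ^ j * (1 - q) * x)⁻¹) * 1 := by
        exact mul_le_mul_of_nonneg_left h1 h2
    _ = _ := mul_one _

lemma qExp_le_one {x : ℝ} (hx : 0 ≤ x) : qExpNeg q x ≤ 1 := by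
  simpa using qExp_le_prodRange hq0 hq1 hx 0

lemma qExp_ge_one_sub {x : ℝ} (hx : 0 ≤ x) : 1 - x ≤ qExpNeg q x := by
  refine ge_of_tendsto (qExp_tendsto_prod hq0 hq1 hx) ?_
  filter_upwards with N
  have key : ∀ N : ℕ, 1 - (∑ j ∈ Finset.range N, q ^ j * (1 - q) * x)
      ≤ ∏ j ∈ Finset.range N, (1 + q ^ j * (1 - q) * x)⁻¹ := by
    intro N
    induction N with
    | zero => simp
    | succ N ih =>
      rw [Finset.prod_range_succ, Finset.sum_range_succ]
      set b := q ^ N * (1 - q) * x with hb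
      set S := ∑ j ∈ Finset.range N, q ^ j * (1 - q) * x with hS
      have hbpos : 0 ≤ b := by
        exact mul_nonneg (mul_nonneg (pow_nonneg hq0.le N) (by linarith : (0:ℝ) ≤ 1-q)) hx
      have hSpos : 0 ≤ S := Finset.sum_nonneg fun j _ =>
        mul_nonneg (mul_nonneg (pow_nonneg hq0.le j) (by linarith : (0:ℝ) ≤ 1-q)) hx
      have h1b : 0 < 1 + b := by linarith
      have hP : 0 ≤ ∏ j ∈ Finset.range N, (1 + q ^ j * (1 - q) * x)⁻¹ :=
        Finset.prod_nonneg fun j _ => (inv_pos.2 (factor_pos hq0 hq1 hx _)).le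
      have step : 1 - S - b ≤ (1 - S) * (1 + b)⁻¹ := by
        rw [← div_eq_mul_inv, le_div_iff₀ h1b]
        nlinarith
      calc 1 - (S + b) = 1 - S - b := by ring
        _ ≤ (1 - S) * (1 + b)⁻¹ := step
        _ ≤ (∏ j ∈ Finset.range N, (1 + q ^ j * (1 - q) * x)⁻¹) * (1 + b)⁻¹ :=
            mul_le_mul_of_nonneg_right ih (inv_pos.2 h1b).le
  refine le_trans ?_ (key N)
  have : ∑ j ∈ Finset.range N, q ^ j * (1 - q) * x ≤ x := by
    have h1 : ∑ j ∈ Finset.range N, q ^ j * (1 - q) * x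
        = (∑ j ∈ Finset.range N, q ^ j) * ((1 - q) * x) := by
      rw [Finset.sum_mul]; exact Finset.sum_congr rfl fun j _ => by ring
    have hgs : ∑ j ∈ Finset.range N, q ^ j ≤ (1 - q)⁻¹ := by
      rw [← tsum_geometric_of_lt_one hq0.le hq1]
      exact Summable.sum_le_tsum _ (fun j _ => pow_nonneg hq0.le j)
        (summable_geometric_of_lt_one hq0.le hq1)
    have hx1 : 0 ≤ (1 - q) * x := mul_nonneg (by linarith) hx
    calc ∑ j ∈ Finset.range N, q ^ j * (1 - q) * x = (∑ j ∈ Finset.range N, q ^ j) * ((1-q)*x) := h1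
      _ ≤ (1 - q)⁻¹ * ((1 - q) * x) := mul_le_mul_of_nonneg_right hgs hx1
      _ = x := by
        have hne : (1:ℝ) - q ≠ 0 := by linarith
        field_simp
  linarith

end E2

section E3
variable {q : ℝ} (hq0 : 0 < q) (hq1 : q < 1)
include hq0 hq1

lemma qExp_funEq {x : ℝ} (hx : 0 ≤ x) :
    qExpNeg q (q * x) = (1 + (1 - q) * x) * qExpNeg q x := by
  set f : ℕ → ℝ := fun j => (1 + q ^ j * (1 - q) * x)⁻¹ with hf
  have hf0 : f 0 = (1 + (1 - q) * x)⁻¹ := by simp [hf]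
  have hqx : 0 ≤ q * x := mul_nonneg hq0.le hx
  have h1 : Tendsto (fun N : ℕ => ∏ j ∈ Finset.range N, f (j + 1)) atTop
      (𝓝 (qExpNeg q (q * x))) := by
    refine (qExp_tendsto_prod hq0 hq1 hqx).congr fun N => ?_
    refine Finset.prod_congr rfl fun j _ => ?_
    rw [hf]
    congr 1
    ring
  have h2 : Tendsto (fun N : ℕ => ∏ j ∈ Finset.range N, f (j + 1)) atTop
      (𝓝 (qExpNeg q x / f 0)) := by
    have h3 : Tendsto (fun N : ℕ => (∏ j ∈ Finset.range (N + 1), f j) / f 0) atTop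
        (𝓝 (qExpNeg q x / f 0)) :=
      ((qExp_tendsto_prod hq0 hq1 hx).comp (tendsto_add_atTop_nat 1)).div_const _
    refine h3.congr fun N => ?_
    rw [Finset.prod_range_succ', mul_div_assoc, div_self, mul_one]
    rw [hf0]
    have : 0 < 1 + (1 - q) * x := by nlinarith
    positivity
  have h4 := tendsto_nhds_unique h1 h2
  rw [h4, hf0, div_inv_eq_mul]
  ring

lemma qExp_le_inv_prod {x : ℝ} (hx : 0 < x) (K : ℕ) :
    qExpNeg q x ≤ ∏ j ∈ Finset.range K, (q ^ j * (1 - q) * x)⁻¹ := by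
  refine (qExp_le_prodRange hq0 hq1 hx.le K).trans ?_
  refine Finset.prod_le_prod (fun j _ => (inv_pos.2 (factor_pos hq0 hq1 hx.le j)).le)
    fun j _ => ?_
  have hb : 0 < q ^ j * (1 - q) * x :=
    mul_pos (mul_pos (pow_pos hq0 j) (by linarith)) hx
  exact inv_anti₀ hb (by linarith)

end E3

noncomputable def Ssum (q t : ℝ) (k : ℕ) : ℝ :=
  ∑' m : ℤ, (q ^ m * t) ^ k * qExpNeg q (q ^ m * t)

section S
variable {q t : ℝ} (hq0 : 0 < q) (hq1 : q < 1) (ht : 0 < t)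
include hq0 hq1 ht

lemma xm_pos (m : ℤ) : 0 < q ^ m * t := mul_pos (zpow_pos hq0 m) ht

lemma Ssum_summable (k : ℕ) (hk : 1 ≤ k) :
    Summable (fun m : ℤ => (q ^ m * t) ^ k * qExpNeg q (q ^ m * t)) := by
  set f : ℤ → ℝ := fun m => (q ^ m * t) ^ k * qExpNeg q (q ^ m * t) with hfdef
  have hfnn : ∀ m, 0 ≤ f m := fun m =>
    mul_nonneg (pow_nonneg (xm_pos hq0 hq1 ht m).le k) (qExp_pos hq0 hq1 (xm_pos hq0 hq1 ht m).le).le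
  have hnat : Summable fun m : ℕ => f m := by
    have hg : Summable fun m : ℕ => t ^ k * (q ^ k) ^ m :=
      (summable_geometric_of_lt_one (pow_nonneg hq0.le k) (pow_lt_one₀ hq0.le hq1
        (by omega))).mul_left _
    refine hg.of_nonneg_of_le (fun m => hfnn m) fun m => ?_
    have hx := xm_pos hq0 hq1 ht (m : ℤ)
    calc f m ≤ (q ^ (m:ℤ) * t) ^ k * 1 :=
          mul_le_mul_of_nonneg_left (qExp_le_one hq0 hq1 hx.le) (pow_nonneg hx.le k)
      _ = t ^ k * (q ^ k) ^ m := by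
          rw [mul_one, zpow_natCast, mul_pow, ← pow_mul, ← pow_mul, mul_comm k m, mul_comm]
    -- done
  have hneg : Summable fun m : ℕ => f (-((m:ℤ) + 1)) := by
    set C : ℝ := ∏ j ∈ Finset.range (k+1), (q ^ j * (1 - q))⁻¹ with hC
    have hCpos : 0 < C := Finset.prod_pos fun j _ =>
      inv_pos.2 (mul_pos (pow_pos hq0 j) (by linarith))
    have hg : Summable fun m : ℕ => (C / t * q) * q ^ m :=
      (summable_geometric_of_lt_one hq0.le hq1).mul_left _
    refine hg.of_nonneg_of_le (fun m => hfnn _) fun m => ?_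
    set x : ℝ := q ^ (-((m:ℤ)+1)) * t with hxdef
    have hx : 0 < x := xm_pos hq0 hq1 ht _
    have hE : qExpNeg q x ≤ C * (x⁻¹) ^ (k + 1) := by
      have h1 := qExp_le_inv_prod hq0 hq1 hx (k+1)
      calc qExpNeg q x ≤ ∏ j ∈ Finset.range (k+1), (q ^ j * (1 - q) * x)⁻¹ := h1
        _ = C * (x⁻¹) ^ (k+1) := by
            simp only [mul_inv]
            rw [Finset.prod_mul_distrib, Finset.prod_const, Finset.card_range]
            rw [hC]
            refine congrArg (· * x⁻¹ ^ (k+1)) (Finset.prod_congr rfl fun j _ => ?_)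
            rw [mul_inv]
    calc f (-((m:ℤ)+1)) = x ^ k * qExpNeg q x := rfl
      _ ≤ x ^ k * (C * (x⁻¹) ^ (k+1)) :=
          mul_le_mul_of_nonneg_left hE (pow_nonneg hx.le k)
      _ = C * (x * x⁻¹) ^ k * x⁻¹ := by rw [mul_pow]; ring
      _ = C * x⁻¹ := by rw [mul_inv_cancel₀ hx.ne', one_pow, mul_one]
      _ = (C / t * q) * q ^ m := by
          rw [hxdef, mul_inv, ← zpow_neg, neg_neg]
          rw [zpow_add₀ hq0.ne', zpow_natCast, zpow_one]
          ring
  exact Summable.of_nat_of_neg_add_one hnat hneg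

end S

section S2
variable {q t : ℝ} (hq0 : 0 < q) (hq1 : q < 1) (ht : 0 < t)
include hq0 hq1 ht

lemma Ssum_base : (1 - q) * Ssum q t 1 = 1 := by
  have hsum : Summable (fun m : ℤ => (q ^ m * t) ^ 1 * qExpNeg q (q ^ m * t)) :=
    Ssum_summable hq0 hq1 ht 1 le_rfl
  set f : ℤ → ℝ := fun m => (1 - q) * ((q ^ m * t) ^ 1 * qExpNeg q (q ^ m * t)) with hfdef
  have hsumf : Summable f := hsum.mul_left _
  -- telescoping identity
  have htel : ∀ m : ℤ, f m = qExpNeg q (q ^ (m+1) * t) - qExpNeg q (q ^ m * t) := by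
    intro m
    have hx := xm_pos hq0 hq1 ht m
    have h1 : q ^ (m+1) * t = q * (q ^ m * t) := by
      rw [zpow_add₀ hq0.ne', zpow_one]; ring
    rw [hfdef]
    simp only [h1, qExp_funEq hq0 hq1 hx.le, pow_one]
    ring
  -- limits
  have hnatlim : Tendsto (fun N : ℕ => qExpNeg q (q ^ (N:ℤ) * t)) atTop (𝓝 1) := by
    have hlow : Tendsto (fun N : ℕ => 1 - q ^ N * t) atTop (𝓝 1) := by
      have := (tendsto_pow_atTop_nhds_zero_of_lt_one hq0.le hq1).mul_const t
      simpa using (tendsto_const_nhds (x := (1:ℝ))).sub this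
    refine tendsto_of_tendsto_of_tendsto_of_le_of_le hlow tendsto_const_nhds
      (fun N => ?_) (fun N => qExp_le_one hq0 hq1 (xm_pos hq0 hq1 ht _).le)
    have := qExp_ge_one_sub hq0 hq1 (xm_pos hq0 hq1 ht (N:ℤ)).le
    rwa [zpow_natCast] at this
  have hneglim : Tendsto (fun N : ℕ => qExpNeg q (q ^ (-(N:ℤ)) * t)) atTop (𝓝 0) := by
    have hup : Tendsto (fun N : ℕ => q ^ N / ((1 - q) * t)) atTop (𝓝 0) := by
      simpa using (tendsto_pow_atTop_nhds_zero_of_lt_one hq0.le hq1).div_const ((1-q)*t)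
    refine tendsto_of_tendsto_of_tendsto_of_le_of_le tendsto_const_nhds hup
      (fun N => (qExp_pos hq0 hq1 (xm_pos hq0 hq1 ht _).le).le) (fun N => ?_)
    have hx := xm_pos hq0 hq1 ht (-(N:ℤ))
    have h1 := qExp_le_inv_prod hq0 hq1 hx 1
    simp only [Finset.prod_range_one, pow_zero, one_mul] at h1
    refine h1.trans (le_of_eq ?_)
    have hzn : (q:ℝ) ^ (-(N:ℤ)) = (q ^ N)⁻¹ := by rw [zpow_neg, zpow_natCast]
    rw [hzn]
    have h1q : (1:ℝ) - q ≠ 0 := by linarith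
    have hqN : (q:ℝ) ^ N ≠ 0 := pow_ne_zero _ hq0.ne'
    field_simp
  -- nat part
  have hnat : HasSum (fun m : ℕ => f m) (1 - qExpNeg q (q ^ (0:ℤ) * t)) := by
    have hs : Summable fun m : ℕ => f m :=
      hsumf.comp_injective fun a b hab => by omega
    have h2 := hs.hasSum.tendsto_sum_nat
    have h3 : Tendsto (fun N : ℕ => ∑ i ∈ Finset.range N, f i) atTop
        (𝓝 (1 - qExpNeg q (q ^ (0:ℤ) * t))) := by
      have heq : ∀ N : ℕ, ∑ i ∈ Finset.range N, f i
          = qExpNeg q (q ^ (N:ℤ) * t) - qExpNeg q (q ^ (0:ℤ) * t) := by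
        intro N
        have h5 := Finset.sum_range_sub (f := fun i : ℕ => qExpNeg q (q ^ (i:ℤ) * t)) N
        push_cast at h5 ⊢
        rw [← h5]
        exact Finset.sum_congr rfl fun i _ => htel i
      refine Tendsto.congr (fun N => (heq N).symm) (hnatlim.sub_const _)
    have h6 := hs.hasSum
    rwa [tendsto_nhds_unique h2 h3] at h6
  -- neg part
  have hneg : HasSum (fun m : ℕ => f (-((m:ℤ) + 1))) (qExpNeg q (q ^ (0:ℤ) * t) - 0) := by
    have hs : Summable fun m : ℕ => f (-((m:ℤ)+1)) := by
      refine hsumf.comp_injective fun a b hab => ?_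
      omega
    have h2 := hs.hasSum.tendsto_sum_nat
    have h3 : Tendsto (fun N : ℕ => ∑ i ∈ Finset.range N, f (-((i:ℤ)+1))) atTop
        (𝓝 (qExpNeg q (q ^ (0:ℤ) * t) - 0)) := by
      have heq : ∀ N : ℕ, ∑ i ∈ Finset.range N, f (-((i:ℤ)+1))
          = qExpNeg q (q ^ (-(0:ℤ)) * t) - qExpNeg q (q ^ (-(N:ℤ)) * t) := by
        intro N
        have h5 := Finset.sum_range_sub' (f := fun i : ℕ => qExpNeg q (q ^ (-(i:ℤ)) * t)) N
        push_cast at h5 ⊢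
        rw [← h5]
        refine Finset.sum_congr rfl fun i _ => ?_
        have h6 := htel (-((i:ℤ)+1))
        have h7 : (-((i:ℤ)+1)) + 1 = -(i:ℤ) := by ring
        rw [h7] at h6
        exact h6
      have h4 : Tendsto (fun N : ℕ => qExpNeg q (q ^ (-(0:ℤ)) * t) - qExpNeg q (q ^ (-(N:ℤ)) * t))
          atTop (𝓝 (qExpNeg q (q ^ (0:ℤ) * t) - 0)) := by
        simpa using (tendsto_const_nhds (x := qExpNeg q (q ^ (-(0:ℤ)) * t))).sub hneglim
      exact Tendsto.congr (fun N => (heq N).symm) h4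
    have h6 := hs.hasSum
    rwa [tendsto_nhds_unique h2 h3] at h6
  have htot : HasSum f 1 := by
    have := hnat.of_nat_of_neg_add_one hneg
    simpa using this
  have : ∑' m, f m = 1 := htot.tsum_eq
  rw [hfdef] at this
  rw [Ssum, ← tsum_mul_left]
  exact this

end S2

section S3
variable {q t : ℝ} (hq0 : 0 < q) (hq1 : q < 1) (ht : 0 < t)
include hq0 hq1 ht

lemma Ssum_rec (k : ℕ) (hk : 1 ≤ k) :
    q ^ k * Ssum q t k + q ^ k * (1 - q) * Ssum q t (k + 1) = Ssum q t k := by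
  set F : ℕ → ℤ → ℝ := fun k m => (q ^ m * t) ^ k * qExpNeg q (q ^ m * t) with hF
  have hs1 : Summable (F k) := Ssum_summable hq0 hq1 ht k hk
  have hs2 : Summable (F (k+1)) := Ssum_summable hq0 hq1 ht (k+1) (by omega)
  have key : ∀ m : ℤ, q ^ k * F k m + q ^ k * (1 - q) * F (k+1) m = F k (m+1) := by
    intro m
    have hx := xm_pos hq0 hq1 ht m
    have h1 : q ^ (m+1) * t = q * (q ^ m * t) := by
      rw [zpow_add₀ hq0.ne', zpow_one]; ring
    simp only [hF]
    rw [h1, qExp_funEq hq0 hq1 hx.le, mul_pow]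
    ring
  have hshift : ∑' m : ℤ, F k (m + 1) = ∑' m : ℤ, F k m := by
    have := (Equiv.addRight (1:ℤ)).tsum_eq (F k)
    simpa using this
  calc q ^ k * Ssum q t k + q ^ k * (1 - q) * Ssum q t (k + 1)
      = ∑' m : ℤ, (q ^ k * F k m + q ^ k * (1 - q) * F (k+1) m) := by
        rw [Ssum, Ssum, ← tsum_mul_left, ← tsum_mul_left,
          Summable.tsum_add (hs1.mul_left _) (hs2.mul_left _)]
    _ = ∑' m : ℤ, F k (m+1) := tsum_congr key
    _ = Ssum q t k := hshift

lemma Ssum_formula (k : ℕ) (hk : 1 ≤ k) :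
    q ^ (k * (k - 1) / 2) * ((1 - q) * Ssum q t k)
      = ∏ i ∈ Finset.range (k - 1), ((1 - q ^ (i + 1)) / (1 - q)) := by
  induction k, hk using Nat.le_induction with
  | base => simpa using Ssum_base hq0 hq1 ht
  | succ k hk ih =>
    obtain ⟨j, rfl⟩ : ∃ j, k = j + 1 := ⟨k - 1, by omega⟩
    have hq1' : (1:ℝ) - q ≠ 0 := by linarith
    have hexp : (j + 2) * (j + 2 - 1) / 2 = (j + 1) * ((j + 1) - 1) / 2 + (j + 1) := by
      have h2 : (j + 2) * (j + 1) = (j + 1) * j + 2 * (j + 1) := by ring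
      have h3 : j + 2 - 1 = j + 1 := rfl
      have h4 : j + 1 - 1 = j := rfl
      rw [h3, h4, h2, Nat.add_mul_div_left _ _ (by norm_num : 0 < 2)]
    have hrec := Ssum_rec hq0 hq1 ht (j + 1) (by omega)
    have h1 : q ^ (j+1) * ((1 - q) * Ssum q t (j + 2)) =
        (1 - q ^ (j+1)) * Ssum q t (j + 1) := by linear_combination hrec
    have goal2 : (j + 1 + 1) = j + 2 := rfl
    calc q ^ ((j + 2) * (j + 2 - 1) / 2) * ((1 - q) * Ssum q t (j + 2))
        = q ^ ((j + 1) * ((j + 1) - 1) / 2) * (q ^ (j + 1) * ((1 - q) * Ssum q t (j + 2))) := by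
          rw [hexp, pow_add]; ring
      _ = q ^ ((j + 1) * ((j + 1) - 1) / 2) * ((1 - q ^ (j+1)) * Ssum q t (j + 1)) := by
          rw [h1]
      _ = ((1 - q ^ (j+1)) / (1 - q)) *
            (q ^ ((j + 1) * ((j + 1) - 1) / 2) * ((1 - q) * Ssum q t (j + 1))) := by
          field_simp
      _ = ((1 - q ^ (j+1)) / (1 - q)) *
            ∏ i ∈ Finset.range ((j + 1) - 1), ((1 - q ^ (i + 1)) / (1 - q)) := by rw [ih]
      _ = ∏ i ∈ Finset.range (j + 2 - 1), ((1 - q ^ (i + 1)) / (1 - q)) := by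
          have h3 : j + 2 - 1 = j + 1 := rfl
          have h4 : j + 1 - 1 = j := rfl
          rw [h3, h4, Finset.prod_range_succ]
          ring

end S3

section Glue
variable {q : ℝ} (hq0 : 0 < q) (hq1 : q < 1)
include hq0 hq1

lemma qGammaTilde_eq {A : ℝ} (hA : 0 < A) (n : ℕ) (hn : 0 < n) :
    qGammaTilde q A (n : ℝ) = (1 - q) * Ssum q (A * (1 - q))⁻¹ n := by
  have hB : 0 < A * (1 - q) := mul_pos hA (by linarith)
  set t : ℝ := (A * (1 - q))⁻¹ with htdef
  have ht : 0 < t := inv_pos.2 hB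
  rw [qGammaTilde, jackson, Ssum]
  congr 1
  refine tsum_congr fun m => ?_
  have hx : 0 < q ^ m * t := xm_pos hq0 hq1 ht m
  have hdiv : q ^ m / (A * (1 - q)) = q ^ m * t := by rw [div_eq_mul_inv]
  rw [hdiv]
  have hcast : (n : ℝ) - 1 = ((n - 1 : ℕ) : ℝ) := by
    rw [Nat.cast_sub hn]; norm_num
  rw [hcast, Real.rpow_natCast]
  have hpow : (q ^ m * t) ^ n = (q ^ m * t) * (q ^ m * t) ^ (n - 1) := by
    conv_lhs => rw [show n = (n - 1) + 1 by omega]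
    rw [pow_succ]
    ring
  rw [hpow]
  ring

set_option maxHeartbeats 1000000 in
lemma qGamma_tprod (n : ℕ) (hn : 0 < n) :
    (∏' j : ℕ, ((1 - q ^ (j + 1)) / (1 - q ^ ((n : ℝ) + (j : ℝ))))) =
      ∏ i ∈ Finset.range (n - 1), (1 - q ^ (i + 1)) := by
  set d : ℕ := n - 1 with hd
  set a : ℕ → ℝ := fun i => 1 - q ^ (i + 1) with ha
  have hapos : ∀ i, 0 < a i := fun i => by
    have : q ^ (i + 1) < 1 := pow_lt_one₀ hq0.le hq1 (by omega)
    simp only [ha]; linarith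
  have hfactor : ∀ j : ℕ, (1 - q ^ ((n : ℝ) + (j : ℝ))) = a (j + d) := by
    intro j
    have : (n : ℝ) + (j : ℝ) = ((n + j : ℕ) : ℝ) := by push_cast; ring
    rw [this, Real.rpow_natCast, ha]
    simp only
    congr 2
    omega
  -- log summability
  have hlog_bound : ∀ i : ℕ, |Real.log (a i)| ≤ q ^ (i + 1) / (1 - q) := by
    intro i
    have h1 : a i ≤ 1 := by
      have : 0 ≤ q ^ (i+1) := pow_nonneg hq0.le _
      simp only [ha]; linarith
    rw [abs_of_nonpos (Real.log_nonpos (hapos i).le h1), ← Real.log_inv]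
    calc Real.log (a i)⁻¹ ≤ (a i)⁻¹ - 1 := Real.log_le_sub_one_of_pos (inv_pos.2 (hapos i))
      _ = (1 - a i) / a i := by
          rw [eq_div_iff (hapos i).ne', sub_mul, inv_mul_cancel₀ (hapos i).ne', one_mul]
      _ ≤ q ^ (i + 1) / (1 - q) := by
          have h2 : 1 - a i = q ^ (i + 1) := by simp [ha]
          rw [h2]
          have hqi : q ^ (i + 1) ≤ q := by
            calc q ^ (i+1) ≤ q ^ 1 := pow_le_pow_of_le_one hq0.le hq1.le (by omega)
              _ = q := pow_one q
          refine div_le_div_of_nonneg_left (pow_nonneg hq0.le _) (by linarith) ?_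
          simp only [ha]
          linarith
  have hloga : Summable fun i => Real.log (a i) := by
    refine Summable.of_abs (Summable.of_nonneg_of_le (fun i => abs_nonneg _) hlog_bound ?_)
    have : Summable fun i : ℕ => (q / (1-q)) * q ^ i :=
      (summable_geometric_of_lt_one hq0.le hq1).mul_left _
    refine this.congr fun i => ?_
    rw [pow_succ]
    ring
  have hlogshift : Summable fun i => Real.log (a (i + d)) := (summable_nat_add_iff d).2 hloga
  have hlogf : Summable fun j => Real.log (a j / a (j + d)) := by
    refine (hloga.sub hlogshift).congr fun j => ?_
    rw [Real.log_div (hapos j).ne' (hapos (j + d)).ne']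
  have hfpos : ∀ j, 0 < a j / a (j + d) := fun j => div_pos (hapos j) (hapos (j + d))
  have hHP : HasProd (fun j => a j / a (j + d)) (Real.exp (∑' j, Real.log (a j / a (j + d)))) :=
    hasProd_of_pos_of_summable_log _ hfpos hlogf
  -- partial products
  have hpartial : ∀ N : ℕ, ∏ j ∈ Finset.range N, (a j / a (j + d))
      = (∏ j ∈ Finset.range d, a j) / ∏ j ∈ Finset.range d, a (N + j) := by
    intro N
    rw [Finset.prod_div_distrib]
    have h1 : ∏ j ∈ Finset.range N, a (j + d) = (∏ j ∈ Finset.range (d + N), a j) /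
        ∏ j ∈ Finset.range d, a j := by
      rw [Finset.prod_range_add]
      rw [eq_div_iff (Finset.prod_pos (fun j _ => hapos j)).ne']
      rw [mul_comm]
      congr 1
      exact Finset.prod_congr rfl fun j _ => by rw [add_comm]
    have h2 : ∏ j ∈ Finset.range (d + N), a j = (∏ j ∈ Finset.range N, a j) *
        ∏ j ∈ Finset.range d, a (N + j) := by
      rw [add_comm d N, Finset.prod_range_add]
    rw [h1, h2]
    have hPN : (0:ℝ) < ∏ j ∈ Finset.range N, a j := Finset.prod_pos fun j _ => hapos j
    have hPd : (0:ℝ) < ∏ j ∈ Finset.range d, a j := Finset.prod_pos fun j _ => hapos j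
    have hPNd : (0:ℝ) < ∏ j ∈ Finset.range d, a (N + j) := Finset.prod_pos fun j _ => hapos _
    field_simp
  have hlim : Tendsto (fun N : ℕ => (∏ j ∈ Finset.range d, a j) / ∏ j ∈ Finset.range d, a (N + j))
      atTop (𝓝 ((∏ j ∈ Finset.range d, a j) / 1)) := by
    refine Tendsto.div tendsto_const_nhds ?_ one_ne_zero
    have h3 : Tendsto (fun N : ℕ => ∏ j ∈ Finset.range d, a (N + j)) atTop
        (𝓝 (∏ j ∈ Finset.range d, (1:ℝ))) := by
      refine tendsto_finset_prod _ fun j _ => ?_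
      have h4 : Tendsto (fun N : ℕ => q ^ (N + j + 1)) atTop (𝓝 0) := by
        have h5 := (tendsto_pow_atTop_nhds_zero_of_lt_one hq0.le hq1).mul_const (q ^ (j+1))
        simp only [zero_mul] at h5
        refine h5.congr fun N => ?_
        rw [← pow_add, add_assoc]
      have := tendsto_const_nhds (x := (1:ℝ)) (f := atTop (α := ℕ))
      simpa [ha] using this.sub h4
    simpa using h3
  have huniq := tendsto_nhds_unique hHP.tendsto_prod_nat
    ((hlim.congr (fun N => (hpartial N).symm)))
  have : ∏' j : ℕ, (a j / a (j + d)) = (∏ j ∈ Finset.range d, a j) / 1 := by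
    rw [hHP.tprod_eq, huniq]
  rw [div_one] at this
  rw [← this]
  exact tprod_congr fun j => by rw [hfactor j]

lemma qGamma_eq (n : ℕ) (hn : 0 < n) :
    qGamma q (n : ℝ) = ∏ i ∈ Finset.range (n - 1), ((1 - q ^ (i + 1)) / (1 - q)) := by
  rw [qGamma]
  have h1 : (∏' j : ℕ, ((1 - q ^ (j + 1)) / (1 - q ^ ((n:ℝ) + (j : ℝ))))) =
      ∏ i ∈ Finset.range (n - 1), (1 - q ^ (i + 1)) := qGamma_tprod hq0 hq1 n hn
  rw [h1]
  have h2 : (1 - q) ^ (1 - (n:ℝ)) = ((1 - q) ^ (n - 1 : ℕ))⁻¹ := by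
    have hc : 1 - (n:ℝ) = -((n - 1 : ℕ) : ℝ) := by
      rw [Nat.cast_sub hn]; push_cast; ring
    rw [hc, Real.rpow_neg (by linarith), Real.rpow_natCast]
  rw [h2, Finset.prod_div_distrib, Finset.prod_const, Finset.card_range, div_eq_mul_inv]

end Glue

theorem stmt_15 (q A : ℝ) (hq0 : 0 < q) (hq1 : q < 1) (hA : 0 < A) (n : ℕ) (hn : 0 < n) :
    q ^ (n * (n - 1) / 2) * qGammaTilde q A (n : ℝ) =
        ∏ k ∈ Finset.range (n - 1), ((1 - q ^ (k + 1)) / (1 - q)) ∧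
      (∏ k ∈ Finset.range (n - 1), ((1 - q ^ (k + 1)) / (1 - q))) = qGamma q (n : ℝ) := by
  have ht : (0:ℝ) < (A * (1 - q))⁻¹ := inv_pos.2 (mul_pos hA (by linarith))
  constructor
  · rw [qGammaTilde_eq hq0 hq1 hA n hn]
    exact Ssum_formula hq0 hq1 ht n hn
  · exact (qGamma_eq hq0 hq1 n hn).symm
end
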